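/- arXiv:2104.06526 — 7 statements merged into one kernel-verified Lean document; each statement's English description precedes it below -/
import Mathlib

section
/- Let (I_1,a_1),…,(I_k,a_k) be finitely many distinct decorated subsets of {1,…,n}. Then the intersection Δ^r_n ∩ H_{(I_1,a_1)} ∩ ⋯ ∩ H_{(I_k,a_k)} is nonempty if and only if, after possibly reordering the pairs (I_j,a_j), one has I_1 ⊊ I_2 ⊊ ⋯ ⊊ I_k and a_j = a_k|_{I_j} for every j — that is, (I_1,…,I_k,a_k) is a decorated nested chain. -/
open Finset

noncomputable section

/-- `deltaP m k = m + (m-1) + ⋯ + (m-k+1)` (so `deltaP m 0 = 0`). -/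
def deltaP (m k : ℕ) : ℝ := ∑ i ∈ Finset.range k, ((m : ℝ) - (i : ℝ))

/-- `Y = ℝ≥0 · μ_r ⊆ ℂ`. -/
def Yset (r : ℕ) : Set ℂ :=
  {x | ∃ t : ℝ, 0 ≤ t ∧ ∃ ω : ℂ, ω ^ r = 1 ∧ x = (t : ℂ) * ω}

/-- The `r`-permutohedral complex `Δ^r_n ⊆ ℂ^n`. -/
def permComplex (r n : ℕ) : Set (Fin n → ℂ) :=
  {x | (∀ i, x i ∈ Yset r) ∧
    ∀ I : Finset (Fin n), ∑ i ∈ I, ‖x i‖ ≤ deltaP n I.card}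

/-- The hyperplane `H_{(I,a)}` of a decorated subset `(I, a)` (only the values of the
decoration `a` on `I` matter). -/
def hyper {r n : ℕ} (ζ : ℂ) (I : Finset (Fin n)) (a : Fin n → ZMod r) :
    Set (Fin n → ℂ) :=
  {x | ∑ i ∈ I, ζ ^ (a i).val * x i = (deltaP n I.card : ℂ)}

lemma deltaP_nonneg {m k : ℕ} (h : k ≤ m) : 0 ≤ deltaP m k := by
  apply Finset.sum_nonneg
  intro i hi
  simp only [mem_range] at hi
  have : (i:ℝ) < (m:ℝ) := by exact_mod_cast lt_of_lt_of_le hi h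
  linarith

lemma deltaP_succ (m c : ℕ) : deltaP m (c + 1) = deltaP m c + ((m:ℝ) - c) := by
  unfold deltaP
  rw [Finset.sum_range_succ]

lemma deltaP_add (m p e : ℕ) :
    deltaP m (p + e) = deltaP m p + ∑ i ∈ Finset.range e, ((m:ℝ) - (p + i)) := by
  unfold deltaP
  rw [Finset.sum_range_add]
  push_cast
  ring_nf

lemma deltaP_strict_submod {n p q u v : ℕ} (hvp : v < p) (hpu : p < u)
    (hsum : u + v = p + q) : deltaP n u + deltaP n v < deltaP n p + deltaP n q := by
  obtain ⟨e, rfl⟩ : ∃ e, u = p + e := ⟨u - p, by omega⟩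
  have hq : q = v + e := by omega
  subst hq
  rw [deltaP_add n p e, deltaP_add n v e]
  have he : 0 < e := by omega
  have hlt : ∑ i ∈ range e, ((n:ℝ) - (p + i)) < ∑ i ∈ range e, ((n:ℝ) - (v + i)) := by
    apply Finset.sum_lt_sum_of_nonempty (by simp [Finset.nonempty_range_iff, he.ne'])
    intro i _
    have : (v:ℝ) < p := by exact_mod_cast hvp
    linarith
  linarith

lemma sum_range_id_le' (T : Finset ℕ) : ∑ p ∈ Finset.range T.card, p ≤ ∑ q ∈ T, q := by
  set m := T.card with hm
  let f : Fin m ↪o ℕ := T.orderEmbOfFin hm.symm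
  have hmem : ∀ i, f i ∈ T := fun i => T.orderEmbOfFin_mem hm.symm i
  have key : ∀ j : ℕ, ∀ h : j < m, j ≤ f ⟨j, h⟩ := by
    intro j
    induction j with
    | zero => intro h; exact Nat.zero_le _
    | succ j ih =>
      intro h
      have h' : j < m := by omega
      have h1 := ih h'
      have h2 : f ⟨j, h'⟩ < f ⟨j + 1, h⟩ := f.strictMono (by simp [Fin.mk_lt_mk])
      omega
  have hT : Finset.univ.image (fun i : Fin m => f i) = T := by
    apply Finset.eq_of_subset_of_card_le
    · intro q hq
      rw [Finset.mem_image] at hq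
      obtain ⟨i, _, rfl⟩ := hq
      exact hmem i
    · rw [Finset.card_image_of_injective _ f.injective, Finset.card_univ, Fintype.card_fin]
  calc ∑ p ∈ Finset.range m, p = ∑ i : Fin m, (i : ℕ) := (Fin.sum_univ_eq_sum_range _ _).symm
    _ ≤ ∑ i : Fin m, f i := Finset.sum_le_sum (fun i _ => key i.1 i.2)
    _ = ∑ q ∈ Finset.univ.image (fun i : Fin m => f i), q :=
        (Finset.sum_image (f := fun q : ℕ => q) (fun x _ y _ h => f.injective h)).symm
    _ = ∑ q ∈ T, q := by rw [hT]

lemma sumt_le {n : ℕ} (g : Fin n → ℕ) (hg : Function.Injective g) (S : Finset (Fin n)) :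
    ∑ i ∈ S, ((n:ℝ) - g i) ≤ deltaP n S.card := by
  classical
  have himg : ∑ i ∈ S, ((n:ℝ) - g i) = ∑ q ∈ S.image g, ((n:ℝ) - q) :=
    (Finset.sum_image (f := fun q : ℕ => ((n:ℝ) - q)) (fun x _ y _ h => hg h)).symm
  rw [himg]
  have hcard : (S.image g).card = S.card := Finset.card_image_of_injective _ hg
  have h1 : ∑ q ∈ S.image g, ((n:ℝ) - q) = S.card * n - ∑ q ∈ S.image g, (q:ℝ) := by
    rw [Finset.sum_sub_distrib, Finset.sum_const, hcard, nsmul_eq_mul]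
  have h2 : deltaP n S.card = S.card * n - ∑ p ∈ Finset.range S.card, (p:ℝ) := by
    unfold deltaP
    rw [Finset.sum_sub_distrib, Finset.sum_const, Finset.card_range, nsmul_eq_mul]
  have h3 : ∑ p ∈ Finset.range S.card, (p:ℝ) ≤ ∑ q ∈ S.image g, (q:ℝ) := by
    have := sum_range_id_le' (S.image g)
    rw [hcard] at this
    calc ∑ p ∈ Finset.range S.card, (p:ℝ) = ((∑ p ∈ Finset.range S.card, p : ℕ) : ℝ) := by
          push_cast; rfl
      _ ≤ ((∑ q ∈ S.image g, q : ℕ) : ℝ) := by exact_mod_cast this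
      _ = ∑ q ∈ S.image g, (q:ℝ) := by push_cast; rfl
  linarith

lemma sumt_eq {n : ℕ} (g : Fin n → ℕ) (hg : Function.Injective g) (Cs : Finset (Fin n))
    (h : ∀ i, i ∈ Cs ↔ g i < Cs.card) :
    ∑ i ∈ Cs, ((n:ℝ) - g i) = deltaP n Cs.card := by
  classical
  have himg : Cs.image g = Finset.range Cs.card := by
    apply Finset.eq_of_subset_of_card_le
    · intro q hq
      rw [Finset.mem_image] at hq
      obtain ⟨i, hi, rfl⟩ := hq
      rw [Finset.mem_range]
      exact (h i).1 hi
    · rw [Finset.card_range, Finset.card_image_of_injective _ hg]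
  calc ∑ i ∈ Cs, ((n:ℝ) - g i) = ∑ q ∈ Cs.image g, ((n:ℝ) - q) :=
        (Finset.sum_image (f := fun q : ℕ => ((n:ℝ) - q)) (fun x _ y _ hxy => hg hxy)).symm
    _ = ∑ q ∈ Finset.range Cs.card, ((n:ℝ) - q) := by rw [himg]
    _ = deltaP n Cs.card := rfl

lemma complex_eq_abs {z : ℂ} (h : z.re = ‖z‖) : z = (‖z‖ : ℂ) := by
  have hsq := Complex.sq_norm z
  have hn : Complex.normSq z = z.re^2 + z.im^2 := by rw [Complex.normSq_apply]; ring
  have him2 : z.im ^ 2 = 0 := by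
    rw [h] at hn
    have := hsq.trans hn
    linarith
  have him : z.im = 0 := by
    have := pow_eq_zero_iff (n := 2) (by norm_num) |>.mp him2
    exact this
  apply Complex.ext
  · simp [← h]
  · simp [him]

lemma tight_of_hyper {r n : ℕ} (hr : r ≠ 0) {ζ : ℂ} (hζr : ζ ^ r = 1) {x : Fin n → ℂ}
    (hx : ∀ S : Finset (Fin n), ∑ i ∈ S, ‖x i‖ ≤ deltaP n S.card)
    {J : Finset (Fin n)} {b : Fin n → ZMod r}
    (hh : ∑ i ∈ J, ζ ^ (b i).val * x i = (deltaP n J.card : ℂ)) :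
    (∑ i ∈ J, ‖x i‖ = deltaP n J.card) ∧
    ∀ i ∈ J, ζ ^ (b i).val * x i = (‖x i‖ : ℂ) := by
  have habsζ : ∀ v : ℕ, ‖ζ ^ v‖ = 1 := by
    intro v
    rw [norm_pow]
    rw [show ‖ζ‖ = 1 from by
      exact Complex.norm_eq_one_of_pow_eq_one hζr hr]
    simp
  set z : Fin n → ℂ := fun i => ζ ^ (b i).val * x i with hz
  have habs : ∀ i, ‖z i‖ = ‖x i‖ := by
    intro i; show ‖ζ ^ (b i).val * x i‖ = ‖x i‖; rw [norm_mul, habsζ, one_mul]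
  have hre : ∀ i, (z i).re ≤ ‖x i‖ := fun i =>
    (Complex.re_le_norm _).trans_eq (habs i)
  have hsumre : ∑ i ∈ J, (z i).re = deltaP n J.card := by
    have h' := congrArg Complex.re hh
    rw [Complex.re_sum, Complex.ofReal_re] at h'
    exact h'
  have hge : deltaP n J.card ≤ ∑ i ∈ J, ‖x i‖ := by
    rw [← hsumre]; exact Finset.sum_le_sum (fun i _ => hre i)
  have heq : ∑ i ∈ J, ‖x i‖ = deltaP n J.card := le_antisymm (hx J) hge
  have hterm : ∀ i ∈ J, (z i).re = ‖x i‖ :=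
    (Finset.sum_eq_sum_iff_of_le (fun i _ => hre i)).1 (hsumre.trans heq.symm)
  refine ⟨heq, fun i hi => ?_⟩
  have h1 := hterm i hi
  have h2 : (z i).re = ‖z i‖ := by rw [h1, habs]
  have h3 := complex_eq_abs h2
  rw [habs] at h3
  exact h3

lemma stmt0_forward (r n : ℕ) (hr : 2 ≤ r) (hn : 1 ≤ n) (ζ : ℂ) (hζ : IsPrimitiveRoot ζ r)
    (k : ℕ) (I : Fin k → Finset (Fin n)) (a : Fin k → Fin n → ZMod r)
    (hne : ∀ j, (I j).Nonempty)
    (hdist : ∀ j j' : Fin k, j ≠ j' → ¬(I j = I j' ∧ ∀ i ∈ I j, a j i = a j' i))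
    (hx : (permComplex r n ∩ ⋂ j : Fin k, hyper ζ (I j) (a j)).Nonempty) :
      ∃ σ : Equiv.Perm (Fin k),
        (∀ j j' : Fin k, j < j' → I (σ j) ⊂ I (σ j')) ∧
        (∀ j j' : Fin k, j ≤ j' → ∀ i ∈ I (σ j), a (σ j) i = a (σ j') i) := by
  classical
  obtain ⟨x, hxΔ, hxH⟩ := hx
  obtain ⟨hY, hineq⟩ := hxΔ
  have hhyp : ∀ j, ∑ i ∈ I j, ζ ^ (a j i).val * x i = (deltaP n (I j).card : ℂ) := by
    intro j
    exact Set.mem_iInter.1 hxH j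
  have hr0 : r ≠ 0 := by omega
  have hkey := fun j => tight_of_hyper hr0 hζ.pow_eq_one hineq (hhyp j)
  set s : Fin n → ℝ := fun i => ‖x i‖ with hs
  have h1 : ∀ j, ∑ i ∈ I j, s i = deltaP n (I j).card := fun j => (hkey j).1
  have h2 : ∀ j, ∀ i ∈ I j, ζ ^ ((a j) i).val * x i = (s i : ℂ) := fun j => (hkey j).2
  have hcardn : ∀ S : Finset (Fin n), S.card ≤ n := fun S => by
    have := Finset.card_le_univ S
    simpa using this
  -- positivity of entries in tight sets
  have hpos : ∀ j, ∀ i ∈ I j, 1 ≤ s i := by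
    intro j i hi
    have hc1 : 1 ≤ (I j).card := Finset.card_pos.2 ⟨i, hi⟩
    have he : ((I j).erase i).card = (I j).card - 1 := Finset.card_erase_of_mem hi
    have hsum : ∑ i' ∈ (I j).erase i, s i' + s i = deltaP n (I j).card := by
      rw [Finset.sum_erase_add _ _ hi]; exact h1 j
    have hle : ∑ i' ∈ (I j).erase i, s i' ≤ deltaP n ((I j).card - 1) := by
      have := hineq ((I j).erase i); rwa [he] at this
    have hdsucc : deltaP n (I j).card
        = deltaP n ((I j).card - 1) + ((n:ℝ) - (((I j).card - 1 : ℕ) : ℝ)) := by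
      conv_lhs => rw [show (I j).card = ((I j).card - 1) + 1 by omega]
      exact deltaP_succ n _
    have hcn : ((I j).card - 1) + 1 ≤ n := by
      have := hcardn (I j); omega
    have hcnr : (((I j).card - 1 : ℕ) : ℝ) + 1 ≤ (n : ℝ) := by exact_mod_cast hcn
    linarith
  have hxne : ∀ j, ∀ i ∈ I j, x i ≠ 0 := by
    intro j i hi h0
    have := hpos j i hi
    rw [hs] at this
    simp only [h0, norm_zero] at this
    linarith
  -- decoration agreement on common elements
  have hdec : ∀ j j', ∀ i, i ∈ I j → i ∈ I j' → a j i = a j' i := by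
    intro j j' i hi hi'
    have e1 := h2 j i hi
    have e2 := h2 j' i hi'
    have hz : ζ ^ (a j i).val = ζ ^ (a j' i).val :=
      mul_right_cancel₀ (hxne j i hi) (e1.trans e2.symm)
    haveI : NeZero r := ⟨hr0⟩
    have hv := hζ.pow_inj (ZMod.val_lt _) (ZMod.val_lt _) hz
    exact ZMod.val_injective r hv
  -- comparability
  have hcomp : ∀ j j', I j ⊆ I j' ∨ I j' ⊆ I j := by
    intro j j'
    by_contra hcon
    push_neg at hcon
    obtain ⟨hns, hns'⟩ := hcon
    have hvp : (I j ∩ I j').card < (I j).card := by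
      apply Finset.card_lt_card
      rw [Finset.ssubset_iff_subset_ne]
      exact ⟨Finset.inter_subset_left, fun hsub => hns (by
        rw [← hsub]; exact Finset.inter_subset_right)⟩
    have hpu : (I j).card < (I j ∪ I j').card := by
      apply Finset.card_lt_card
      rw [Finset.ssubset_iff_subset_ne]
      refine ⟨Finset.subset_union_left, fun hsub => hns' ?_⟩
      rw [hsub]
      exact Finset.subset_union_right
    have hsumc : (I j ∪ I j').card + (I j ∩ I j').card = (I j).card + (I j').card :=
      Finset.card_union_add_card_inter _ _
    have hmod : ∑ i ∈ I j ∪ I j', s i + ∑ i ∈ I j ∩ I j', s i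
        = deltaP n (I j).card + deltaP n (I j').card := by
      rw [Finset.sum_union_inter, h1 j, h1 j']
    have h3 := hineq (I j ∪ I j')
    have h4 := hineq (I j ∩ I j')
    have h5 := deltaP_strict_submod (n := n) hvp hpu hsumc
    linarith
  have hInj : Function.Injective I := by
    intro j j' hII
    by_contra hne'
    exact hdist j j' hne' ⟨hII, fun i hi => hdec j j' i hi (hII ▸ hi)⟩
  set f : Fin k → ℕ := fun j => (I j).card with hf
  have hfinj : Function.Injective f := by
    intro j j' hfe
    rcases hcomp j j' with h | h
    · exact hInj (Finset.eq_of_subset_of_card_le h (le_of_eq hfe.symm))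
    · exact (hInj (Finset.eq_of_subset_of_card_le h (le_of_eq hfe))).symm
  have hss : ∀ j j' : Fin k, j < j' → I (Tuple.sort f j) ⊂ I (Tuple.sort f j') := by
    intro j j' hjj
    have hmono := Tuple.monotone_sort f hjj.le
    have hne'' : Tuple.sort f j ≠ Tuple.sort f j' := fun h => hjj.ne (Equiv.injective _ h)
    have hlt : f (Tuple.sort f j) < f (Tuple.sort f j') :=
      lt_of_le_of_ne hmono (fun h => hne'' (hfinj h))
    rcases hcomp (Tuple.sort f j) (Tuple.sort f j') with h | h
    · rw [Finset.ssubset_iff_subset_ne]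
      exact ⟨h, fun he => hlt.ne (show (I _).card = (I _).card by rw [he])⟩
    · exact absurd (Finset.card_le_card h) (not_le.2 hlt)
  refine ⟨Tuple.sort f, hss, ?_⟩
  intro j j' hjj i hi
  rcases hjj.lt_or_eq with hlt | heq
  · exact hdec _ _ i hi ((hss j j' hlt).subset hi)
  · rw [heq]

lemma stmt0_reverse (r n : ℕ) (hr : 2 ≤ r) (hn : 1 ≤ n) (ζ : ℂ) (hζ : IsPrimitiveRoot ζ r)
    (k : ℕ) (I : Fin k → Finset (Fin n)) (a : Fin k → Fin n → ZMod r)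
    (σ : Equiv.Perm (Fin k))
    (hchain : ∀ j j' : Fin k, j < j' → I (σ j) ⊂ I (σ j'))
    (hcompat : ∀ j j' : Fin k, j ≤ j' → ∀ i ∈ I (σ j), a (σ j) i = a (σ j') i) :
    (permComplex r n ∩ ⋂ j : Fin k, hyper ζ (I j) (a j)).Nonempty := by
  classical
  have hr0 : r ≠ 0 := by omega
  have hζ0 : ζ ≠ 0 := by
    intro h0
    have h1 := hζ.pow_eq_one
    rw [h0, zero_pow hr0] at h1
    exact zero_ne_one h1
  have habs1 : ‖ζ‖ = 1 := by
    exact Complex.norm_eq_one_of_pow_eq_one hζ.pow_eq_one hr0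
  set C : Fin k → Finset (Fin n) := fun j => I (σ j) with hC
  have hCsub : ∀ j j' : Fin k, j ≤ j' → C j ⊆ C j' := by
    intro j j' h
    rcases h.lt_or_eq with h | h
    · exact (hchain _ _ h).subset
    · rw [h]
  have hEx : ∀ i : Fin n, ∃ m : ℕ, m = k ∨ ∃ h : m < k, i ∈ C ⟨m, h⟩ := fun _ => ⟨k, Or.inl rfl⟩
  set ρ : Fin n → ℕ := fun i => Nat.find (hEx i) with hρ
  have hρmem : ∀ (i : Fin n) (j : Fin k), i ∈ C j ↔ ρ i ≤ j.1 := by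
    intro i j
    constructor
    · intro hi
      exact Nat.find_le (Or.inr ⟨j.2, hi⟩)
    · intro hle
      rcases Nat.find_spec (hEx i) with h | ⟨h, hmem⟩
      · exfalso
        have h' : ρ i = k := h
        have := j.2
        omega
      · exact hCsub ⟨ρ i, h⟩ j (by rw [Fin.le_def]; exact hle) hmem
  set K : Fin n → ℕ := fun i => ρ i * n + i.1 with hK
  have hKlt : ∀ i i' : Fin n, ρ i < ρ i' → K i < K i' := by
    intro i i' h
    calc K i = ρ i * n + i.1 := rfl
      _ < ρ i * n + n := by have := i.2; omega
      _ = (ρ i + 1) * n := by ring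
      _ ≤ ρ i' * n := Nat.mul_le_mul_right n h
      _ ≤ K i' := Nat.le_add_right _ _
  have hρof : ∀ i i' : Fin n, K i < K i' → ρ i ≤ ρ i' := by
    intro i i' h
    by_contra hcon
    push_neg at hcon
    exact absurd h (not_lt.2 (hKlt i' i hcon).le)
  have hKinj : Function.Injective K := by
    intro i i' h
    have h1 : ρ i = ρ i' := by
      by_contra hcon
      rcases Nat.lt_or_ge (ρ i) (ρ i') with hc | hc
      · exact absurd h (hKlt i i' hc).ne
      · exact absurd h.symm (hKlt i' i (by omega)).ne
    have h2 : ρ i * n + i.1 = ρ i' * n + i'.1 := h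
    rw [h1] at h2
    have h3 : i.1 = i'.1 := Nat.add_left_cancel h2
    exact Fin.ext h3
  set rank : Fin n → ℕ := fun i => (Finset.univ.filter (fun i' => K i' < K i)).card with hrank
  have hrn : ∀ i, rank i < n := by
    intro i
    have hsub : (Finset.univ.filter (fun i' => K i' < K i)) ⊆ Finset.univ.erase i := by
      intro i' hi'
      rw [Finset.mem_filter] at hi'
      exact Finset.mem_erase.2 ⟨fun he => absurd hi'.2 (by rw [he]; exact lt_irrefl _),
        Finset.mem_univ _⟩
    calc rank i ≤ (Finset.univ.erase i).card := Finset.card_le_card hsub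
      _ = n - 1 := by
          rw [Finset.card_erase_of_mem (Finset.mem_univ i), Finset.card_univ, Fintype.card_fin]
      _ < n := by omega
  have hrmono : ∀ i i' : Fin n, K i < K i' → rank i < rank i' := by
    intro i i' h
    apply Finset.card_lt_card
    rw [Finset.ssubset_def]
    constructor
    · intro i'' hi''
      rw [Finset.mem_filter] at hi'' ⊢
      exact ⟨Finset.mem_univ _, hi''.2.trans h⟩
    · intro hcon
      have := hcon (Finset.mem_filter.2 ⟨Finset.mem_univ i, h⟩)
      rw [Finset.mem_filter] at this
      exact absurd this.2 (lt_irrefl _)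
  have hrinj : Function.Injective rank := by
    intro i i' h
    by_contra hne'
    have hKne : K i ≠ K i' := fun he => hne' (hKinj he)
    rcases hKne.lt_or_gt with hlt | hlt
    · exact absurd h (hrmono _ _ hlt).ne
    · exact absurd h.symm (hrmono _ _ hlt).ne
  have hrC : ∀ j : Fin k, ∀ i, i ∈ C j ↔ rank i < (C j).card := by
    intro j i
    constructor
    · intro hi
      have hsub2 : (Finset.univ.filter (fun i' => K i' < K i)) ⊆ (C j).erase i := by
        intro i' hi'
        rw [Finset.mem_filter] at hi'
        have hρ' : ρ i' ≤ ρ i := hρof i' i hi'.2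
        have hin : i' ∈ C j := (hρmem i' j).2 (le_trans hρ' ((hρmem i j).1 hi))
        exact Finset.mem_erase.2
          ⟨fun he => absurd hi'.2 (by rw [he]; exact lt_irrefl _), hin⟩
      have hcle := Finset.card_le_card hsub2
      have hc : 0 < (C j).card := Finset.card_pos.2 ⟨i, hi⟩
      rw [Finset.card_erase_of_mem hi] at hcle
      have hcle' : rank i ≤ (C j).card - 1 := hcle
      omega
    · intro hlt
      by_contra hni
      have hsub3 : C j ⊆ Finset.univ.filter (fun i' => K i' < K i) := by
        intro i' hi'
        rw [Finset.mem_filter]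
        refine ⟨Finset.mem_univ _, hKlt i' i ?_⟩
        have ha1 : ρ i' ≤ j.1 := (hρmem i' j).1 hi'
        have ha2 : ¬ ρ i ≤ j.1 := fun hcc => hni ((hρmem i j).2 hcc)
        omega
      exact absurd hlt (not_lt.2 (Finset.card_le_card hsub3))
  -- the point
  set b : Fin n → ZMod r := fun i =>
    if hk : 0 < k then a (σ ⟨k - 1, by omega⟩) i else 0 with hb
  set t : Fin n → ℝ := fun i => (n : ℝ) - rank i with ht
  have htnn : ∀ i, 0 ≤ t i := by
    intro i
    have := hrn i
    have : (rank i : ℝ) < n := by exact_mod_cast this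
    simp only [ht]
    linarith
  set x : Fin n → ℂ := fun i => ((t i : ℝ) : ℂ) * (ζ ^ (b i).val)⁻¹ with hx
  have habsx : ∀ i, ‖x i‖ = t i := by
    intro i
    simp only [hx, norm_mul, norm_inv, norm_pow, Complex.norm_real, Real.norm_eq_abs, habs1, one_pow, inv_one,
      mul_one]
    exact abs_of_nonneg (htnn i)
  refine ⟨x, ⟨?_, ?_⟩, ?_⟩
  · intro i
    refine ⟨t i, htnn i, (ζ ^ (b i).val)⁻¹, ?_, rfl⟩
    rw [inv_pow, ← pow_mul, mul_comm, pow_mul, hζ.pow_eq_one, one_pow, inv_one]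
  · intro S
    calc ∑ i ∈ S, ‖x i‖ = ∑ i ∈ S, ((n : ℝ) - rank i) :=
          Finset.sum_congr rfl (fun i _ => habsx i)
      _ ≤ deltaP n S.card := sumt_le rank hrinj S
  · rw [Set.mem_iInter]
    intro j
    have hj : σ (σ.symm j) = j := σ.apply_symm_apply j
    have hIC : I j = C (σ.symm j) := by rw [hC]; simp only [hj]
    have hk0 : 0 < k := lt_of_le_of_lt (Nat.zero_le _) j.2
    have hae : ∀ i ∈ I j, a j i = b i := by
      intro i hi
      simp only [hb, dif_pos hk0]
      have hcc := hcompat (σ.symm j) ⟨k - 1, by omega⟩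
        (by rw [Fin.le_def]; simp only; omega) i (by rw [hj]; exact hi)
      rw [hj] at hcc
      exact hcc
    show ∑ i ∈ I j, ζ ^ (a j i).val * x i = (deltaP n (I j).card : ℂ)
    have hterm : ∀ i ∈ I j, ζ ^ (a j i).val * x i = (((n : ℝ) - rank i : ℝ) : ℂ) := by
      intro i hi
      rw [hae i hi]
      simp only [hx]
      rw [mul_comm ((t i : ℝ) : ℂ) _, ← mul_assoc, mul_inv_cancel₀ (pow_ne_zero _ hζ0), one_mul]
    rw [Finset.sum_congr rfl hterm, ← Complex.ofReal_sum]
    congr 1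
    rw [hIC]
    exact sumt_eq rank hrinj (C (σ.symm j)) (hrC (σ.symm j))

/-- Lemma 7.5: the intersection of `Δ^r_n` with the hyperplanes of
finitely many distinct decorated subsets is nonempty iff, after reordering, the
decorated subsets form a decorated nested chain. -/
theorem stmt0 (r n : ℕ) (hr : 2 ≤ r) (hn : 1 ≤ n) (ζ : ℂ) (hζ : IsPrimitiveRoot ζ r)
    (k : ℕ) (I : Fin k → Finset (Fin n)) (a : Fin k → Fin n → ZMod r)
    (hne : ∀ j, (I j).Nonempty)
    (hdist : ∀ j j' : Fin k, j ≠ j' → ¬(I j = I j' ∧ ∀ i ∈ I j, a j i = a j' i)) :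
    (permComplex r n ∩ ⋂ j : Fin k, hyper ζ (I j) (a j)).Nonempty ↔
      ∃ σ : Equiv.Perm (Fin k),
        (∀ j j' : Fin k, j < j' → I (σ j) ⊂ I (σ j')) ∧
        (∀ j j' : Fin k, j ≤ j' → ∀ i ∈ I (σ j), a (σ j) i = a (σ j') i) := by
  constructor
  · exact stmt0_forward r n hr hn ζ hζ k I a hne hdist
  · rintro ⟨σ, h1, h2⟩
    exact stmt0_reverse r n hr hn ζ hζ k I a σ h1 h2
end
end

section
/- If a point x = (x_1,…,x_n) lies in Δ^r_n ∩ H_{(I,a)} for some decorated subset (I,a) of {1,…,n}, then for every i ∈ I there exists a real number λ_i > 0 such that x_i = λ_i·ζ^{−a(i)}. -/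
open Finset

noncomputable section

/-- if `x ∈ Δ^r_n ∩ H_{(I,a)}`, then for every `i ∈ I` there is a real
`λ_i > 0` with `x_i = λ_i · ζ^{-a(i)}`. -/
theorem stmt1 (r n : ℕ) (hr : 2 ≤ r) (hn : 1 ≤ n) (ζ : ℂ) (hζ : IsPrimitiveRoot ζ r)
    (I : Finset (Fin n)) (hI : I.Nonempty) (a : Fin n → ZMod r)
    (x : Fin n → ℂ) (hx : x ∈ permComplex r n ∩ hyper ζ I a) :
    ∀ i ∈ I, ∃ lam : ℝ, 0 < lam ∧ x i = (lam : ℂ) * ζ ^ (-(((a i).val : ℤ))) := by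
  obtain ⟨⟨hY, hsum⟩, hhyp⟩ := hx
  have hζ0 : ζ ≠ 0 := hζ.ne_zero (by omega)
  have habsζ : ‖ζ‖ = 1 := by
    have h1 : ‖ζ‖ ^ r = 1 := by
      rw [← norm_pow, hζ.pow_eq_one, norm_one]
    rcases (pow_eq_one_iff_cases).mp h1 with h | h | h
    · omega
    · exact h
    · exfalso; have := norm_nonneg ζ; linarith [h.1]
  have habsterm : ∀ i ∈ I, ‖ζ ^ (a i).val * x i‖ = ‖x i‖ := by
    intro i _
    rw [norm_mul, norm_pow, habsζ, one_pow, one_mul]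
  -- real part of hyperplane equation
  have hre : ∑ i ∈ I, (ζ ^ (a i).val * x i).re = deltaP n I.card := by
    have := congrArg Complex.re hhyp
    simpa [Complex.re_sum] using this
  have hle : ∀ i ∈ I, (ζ ^ (a i).val * x i).re ≤ ‖x i‖ := by
    intro i hi
    calc (ζ ^ (a i).val * x i).re ≤ ‖ζ ^ (a i).val * x i‖ := Complex.re_le_norm _
      _ = ‖x i‖ := habsterm i hi
  have hsumI : ∑ i ∈ I, ‖x i‖ ≤ deltaP n I.card := hsum I
  have hsumeq : ∑ i ∈ I, (ζ ^ (a i).val * x i).re = ∑ i ∈ I, ‖x i‖ := by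
    have h1 : ∑ i ∈ I, (ζ ^ (a i).val * x i).re ≤ ∑ i ∈ I, ‖x i‖ :=
      Finset.sum_le_sum hle
    linarith [hre, hsumI]
  have habseq : ∑ i ∈ I, ‖x i‖ = deltaP n I.card := by linarith [hre]
  have hterm : ∀ i ∈ I, (ζ ^ (a i).val * x i).re = ‖x i‖ :=
    fun i hi => (Finset.sum_eq_sum_iff_of_le hle).mp hsumeq i hi
  intro i hi
  -- x i ≠ 0 : otherwise the sum over I is at most deltaP n (I.card - 1) < deltaP n I.card
  have hcard : I.card ≤ n := by
    simpa using Finset.card_le_univ I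
  have hxne : ‖x i‖ ≠ 0 := by
    intro h0
    have hsplit : ∑ j ∈ I, ‖x j‖ = ∑ j ∈ I.erase i, ‖x j‖ := by
      rw [← Finset.add_sum_erase I _ hi, h0, zero_add]
    have hle2 : ∑ j ∈ I.erase i, ‖x j‖ ≤ deltaP n (I.erase i).card := hsum _
    have hcarderase : (I.erase i).card = I.card - 1 := Finset.card_erase_of_mem hi
    have hc1 : 1 ≤ I.card := Finset.one_le_card.mpr hI
    have key : ∀ k : ℕ, k < n → deltaP n k < deltaP n (k + 1) := by
      intro k hk
      rw [deltaP, deltaP, Finset.sum_range_succ]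
      have : (0 : ℝ) < (n : ℝ) - (k : ℝ) := by
        have : (k : ℝ) < (n : ℝ) := by exact_mod_cast hk
        linarith
      linarith
    have hlt := key (I.card - 1) (by omega)
    have hcc : I.card - 1 + 1 = I.card := by omega
    rw [hcc] at hlt
    rw [hsplit, ] at habseq
    rw [hcarderase] at hle2
    linarith
  have hxpos : 0 < ‖x i‖ := lt_of_le_of_ne (norm_nonneg _) (Ne.symm hxne)
  refine ⟨‖x i‖, hxpos, ?_⟩
  -- show ζ ^ (a i).val * x i = |x i| (real)
  set z := ζ ^ (a i).val * x i with hz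
  have hzabs : ‖z‖ = ‖x i‖ := habsterm i hi
  have hzre : z.re = ‖z‖ := by rw [hzabs]; exact hterm i hi
  have him : z.im = 0 := by
    have h1 : z.re ^ 2 + z.im ^ 2 = ‖z‖ ^ 2 := by
      rw [Complex.sq_norm, Complex.normSq_apply]; ring
    have : z.im ^ 2 = 0 := by rw [hzre] at h1; nlinarith
    exact pow_eq_zero_iff (n := 2) (by norm_num) |>.mp this
  have hzeq : z = (‖x i‖ : ℂ) := by
    rw [← hzabs, ← hzre]
    exact Complex.ext rfl (by simp [him])
  have hxi : x i = (‖x i‖ : ℂ) * (ζ ^ (a i).val)⁻¹ := by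
    have hpow : (ζ : ℂ) ^ (a i).val ≠ 0 := pow_ne_zero _ hζ0
    field_simp
    linear_combination hzeq
  have hzp : ζ ^ (-(((a i).val : ℤ))) = (ζ ^ (a i).val)⁻¹ := by
    rw [zpow_neg, zpow_natCast]
  rw [hzp]
  exact hxi
end
end

section
/- If (I,a) and (J,b) are decorated subsets of {1,…,n} and the intersection Δ^r_n ∩ H_{(I,a)} ∩ H_{(J,b)} is nonempty, then I ⊆ J or J ⊆ I. -/
open Finset

noncomputable section

lemma sum_id_real (k : ℕ) : (∑ i ∈ Finset.range k, (i:ℝ)) = k*(k-1)/2 := by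
  induction k with
  | zero => simp
  | succ m ih => rw [Finset.sum_range_succ, ih]; push_cast; ring

lemma deltaP_closed (m k : ℕ) : deltaP m k = k * m - k*((k:ℝ)-1)/2 := by
  unfold deltaP
  rw [Finset.sum_sub_distrib, sum_id_real, Finset.sum_const, Finset.card_range]
  simp [nsmul_eq_mul]

lemma deltaP_concave {n p q k l : ℕ} (h1 : p < k) (h2 : p < l) (hq : p + q = k + l) :
    deltaP n p + deltaP n q < deltaP n k + deltaP n l := by
  rw [deltaP_closed, deltaP_closed, deltaP_closed, deltaP_closed]
  have hc : (p:ℝ) + q = k + l := by exact_mod_cast hq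
  have h1' : (p:ℝ) < k := by exact_mod_cast h1
  have h2' : (p:ℝ) < l := by exact_mod_cast h2
  nlinarith [mul_pos (sub_pos.mpr h1') (sub_pos.mpr h2')]

lemma key {r n : ℕ} {ζ : ℂ} (hζ : ‖ζ‖ = 1) {x : Fin n → ℂ}
    (hx : x ∈ permComplex r n) {I : Finset (Fin n)} {a : Fin n → ZMod r}
    (hxI : x ∈ hyper ζ I a) :
    ∑ i ∈ I, ‖x i‖ = deltaP n I.card := by
  have hcard : I.card ≤ n := by
    simpa using Finset.card_le_univ I
  have hδ : 0 ≤ deltaP n I.card := deltaP_nonneg hcard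
  have h1 : deltaP n I.card = ‖∑ i ∈ I, ζ ^ (a i).val * x i‖ := by
    rw [hxI]
    rw [Complex.norm_real, Real.norm_eq_abs, abs_of_nonneg hδ]
  have h2 : ‖∑ i ∈ I, ζ ^ (a i).val * x i‖ ≤ ∑ i ∈ I, ‖x i‖ := by
    refine le_trans (norm_sum_le _ _) (le_of_eq ?_)
    apply Finset.sum_congr rfl
    intro i _
    rw [norm_mul, norm_pow, hζ, one_pow, one_mul]
  have h3 := hx.2 I
  linarith

/-- if `Δ^r_n ∩ H_{(I,a)} ∩ H_{(J,b)}` is nonempty then `I ⊆ J` or `J ⊆ I`. -/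
theorem stmt2 (r n : ℕ) (hr : 2 ≤ r) (hn : 1 ≤ n) (ζ : ℂ) (hζ : IsPrimitiveRoot ζ r)
    (I J : Finset (Fin n)) (hI : I.Nonempty) (hJ : J.Nonempty)
    (a b : Fin n → ZMod r)
    (hne : (permComplex r n ∩ hyper ζ I a ∩ hyper ζ J b).Nonempty) :
    I ⊆ J ∨ J ⊆ I := by
  by_contra h
  push_neg at h
  obtain ⟨hIJ, hJI⟩ := h
  obtain ⟨i, hiI, hiJ⟩ := Finset.not_subset.mp hIJ
  obtain ⟨j, hjJ, hjI⟩ := Finset.not_subset.mp hJI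
  obtain ⟨x, ⟨⟨hxP, hxI⟩, hxJ⟩⟩ := hne
  have hζabs : ‖ζ‖ = 1 :=
    Complex.norm_eq_one_of_pow_eq_one hζ.pow_eq_one (by omega)
  have hSI := key hζabs hxP hxI
  have hSJ := key hζabs hxP hxJ
  have hsum : (∑ i ∈ I ∪ J, ‖x i‖) + ∑ i ∈ I ∩ J, ‖x i‖
      = (∑ i ∈ I, ‖x i‖) + ∑ i ∈ J, ‖x i‖ :=
    Finset.sum_union_inter
  have hU := hxP.2 (I ∪ J)
  have hN := hxP.2 (I ∩ J)
  have hcard : (I ∩ J).card + (I ∪ J).card = I.card + J.card := by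
    rw [add_comm]; exact Finset.card_union_add_card_inter I J
  have hpI : (I ∩ J).card < I.card := by
    apply Finset.card_lt_card
    exact (Finset.ssubset_iff_of_subset (Finset.inter_subset_left)).mpr
      ⟨i, hiI, by simp [hiJ]⟩
  have hpJ : (I ∩ J).card < J.card := by
    apply Finset.card_lt_card
    exact (Finset.ssubset_iff_of_subset (Finset.inter_subset_right)).mpr
      ⟨j, hjJ, by simp [hjI]⟩
  have hconc := deltaP_concave (n := n) hpI hpJ hcard
  linarith
end
end

section
/- Let m ≥ 1 and let n_1 ≥ n_2 ≥ ⋯ ≥ n_m ≥ 0 be integers, with the convention n_{m+1} := 0, and let a_1,…,a_m be integers with 0 ≤ a_j ≤ n_j − n_{j+1} for each j ∈ {1,…,m}. Then Σ_{j=1}^m δ^{n_j}_{a_j} ≤ δ^{n_1}_{a_1 + ⋯ + a_m}. -/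
open Finset

noncomputable section

lemma deltaP_add_le (n0 n1 a b : ℕ) (h : n1 + a ≤ n0) :
    deltaP n0 a + deltaP n1 b ≤ deltaP n0 (a + b) := by
  unfold deltaP
  rw [Finset.sum_range_add]
  have hcast : (n1 : ℝ) + a ≤ n0 := by exact_mod_cast h
  refine add_le_add_right (Finset.sum_le_sum fun i _ => ?_) _
  push_cast
  linarith

lemma stmt4_aux : ∀ m, 1 ≤ m → ∀ nseq : ℕ → ℕ,
    (∀ j, j < m → nseq (j + 1) ≤ nseq j) → ∀ a : ℕ → ℕ,
    (∀ j, j < m → a j ≤ nseq j - nseq (j + 1)) →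
    ∑ j ∈ Finset.range m, deltaP (nseq j) (a j) ≤
      deltaP (nseq 0) (∑ j ∈ Finset.range m, a j) := by
  intro m hm
  induction m, hm using Nat.le_induction with
  | base => intro nseq _ a _; simp
  | succ m hm ih =>
    intro nseq hmono a ha
    rw [Finset.sum_range_succ', Finset.sum_range_succ']
    have key := ih (fun j => nseq (j + 1))
      (fun j hj => hmono (j + 1) (by omega)) (fun j => a (j + 1))
      (fun j hj => ha (j + 1) (by omega))
    have h1 : nseq 1 + a 0 ≤ nseq 0 := by
      have h0 := ha 0 (by omega); have h0' := hmono 0 (by omega)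
      simp only [Nat.zero_add] at h0 h0'; omega
    calc ∑ j ∈ Finset.range m, deltaP (nseq (j + 1)) (a (j + 1)) + deltaP (nseq 0) (a 0)
        ≤ deltaP (nseq 1) (∑ j ∈ Finset.range m, a (j + 1)) + deltaP (nseq 0) (a 0) := by
          linarith
      _ ≤ deltaP (nseq 0) (a 0 + ∑ j ∈ Finset.range m, a (j + 1)) := by
          rw [add_comm (deltaP (nseq 1) _)]
          exact deltaP_add_le _ _ _ _ h1
      _ = deltaP (nseq 0) (∑ j ∈ Finset.range m, a (j + 1) + a 0) := by rw [add_comm]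

/-- for a weakly decreasing sequence `n_0 ≥ n_1 ≥ ⋯ ≥ n_{m-1} ≥ n_m = 0`
(0-indexed here) and `0 ≤ a_j ≤ n_j − n_{j+1}`, one has
`Σ_j δ^{n_j}_{a_j} ≤ δ^{n_0}_{a_0 + ⋯ + a_{m-1}}`. -/
theorem stmt4 (m : ℕ) (hm : 1 ≤ m) (nseq : ℕ → ℕ)
    (hmono : ∀ j, j < m → nseq (j + 1) ≤ nseq j) (hlast : nseq m = 0)
    (a : ℕ → ℕ) (ha : ∀ j, j < m → a j ≤ nseq j - nseq (j + 1)) :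
    ∑ j ∈ Finset.range m, deltaP (nseq j) (a j) ≤
      deltaP (nseq 0) (∑ j ∈ Finset.range m, a j) := by
  exact stmt4_aux m hm nseq hmono a ha
end
end

section
/- Let I = (I_1,…,I_k,a) be a decorated nested chain. A point x = (x_1,…,x_n) ∈ ℂ^n lies in F_I if and only if all three of the following hold: (C1') x_i ∈ Y for every i ∈ {1,…,n}∖I_k and Σ_{i∈I} |x_i| ≤ δ^{n−|I_k|}_{|I|} for every subset I ⊆ {1,…,n}∖I_k; (C2') x_i ∈ ℝ_{≥0}·ζ^{−a(i)} for every i ∈ I_k; (C3') for every j ∈ {1,…,k}, the vector (|x_i|)_{i∈I_j∖I_{j−1}} lies in the shifted permutohedron Π_{|I_j∖I_{j−1}|} + γ_j, where γ_j := n − |I_j|. -/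
open Finset

noncomputable section

/-- A decorated nested chain `∅ ⊊ I_1 ⊊ ⋯ ⊊ I_k ⊆ [n]` (here `I j` for `j : Fin len`,
strictly increasing and all nonempty), with decoration `dec : I_k → ℤ/r` (the top set
`I_k` is `Finset.univ.sup I`). -/
structure DecChain (r n : ℕ) where
  len : ℕ
  I : Fin len → Finset (Fin n)
  nonempty : ∀ j, (I j).Nonempty
  mono : ∀ j j' : Fin len, j < j' → I j ⊂ I j'
  dec : ∀ i : Fin n, i ∈ Finset.univ.sup I → ZMod r

/-- The top set `I_k` of a chain (`∅` when `k = 0`). -/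
def DecChain.top {r n : ℕ} (c : DecChain r n) : Finset (Fin n) :=
  Finset.univ.sup c.I

theorem DecChain.mem_top {r n : ℕ} (c : DecChain r n) (j : Fin c.len) {i : Fin n}
    (h : i ∈ c.I j) : i ∈ c.top :=
  Finset.mem_of_subset (Finset.le_sup (Finset.mem_univ j)) h

/-- The Δ-face `F_I = Δ^r_n ∩ H_{(I_1,a|_{I_1})} ∩ ⋯ ∩ H_{(I_k,a|_{I_k})}` of a
decorated nested chain. -/
def Fface {r n : ℕ} (ζ : ℂ) (c : DecChain r n) : Set (Fin n → ℂ) :=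
  {x | x ∈ permComplex r n ∧ ∀ j : Fin c.len,
    ∑ i ∈ (c.I j).attach, ζ ^ (c.dec i.1 (c.mem_top j i.2)).val * x i.1
      = (deltaP n (c.I j).card : ℂ)}
/-- The predecessor set `I_{j-1}` of the chain (`∅` when `j` is the first index). -/
def DecChain.prev {r n : ℕ} (c : DecChain r n) (j : Fin c.len) : Finset (Fin n) :=
  if (j : ℕ) = 0 then ∅
  else c.I ⟨(j : ℕ) - 1, Nat.lt_of_le_of_lt (Nat.sub_le _ _) j.isLt⟩
/-- The `γ`-shifted permutohedron `Π_m + γ ⊆ ℝ^m`. -/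
def shiftedPerm (m : ℕ) (γ : ℝ) : Set (Fin m → ℝ) :=
  {v | (∀ S : Finset (Fin m), S ≠ Finset.univ →
          ∑ i ∈ S, v i ≤ deltaP m S.card + (S.card : ℝ) * γ) ∧
       ∑ i, v i = deltaP m m + (m : ℝ) * γ}


/-! ### Auxiliary lemmas -/

lemma deltaP_add_s6 (n b s : ℕ) :
    deltaP n (b + s) = deltaP n b + ∑ t ∈ range s, ((n : ℝ) - b - t) := by
  unfold deltaP
  rw [Finset.sum_range_add]
  congr 1
  exact Finset.sum_congr rfl fun t _ => by push_cast; ring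

lemma deltaP_zero (n : ℕ) : deltaP n 0 = 0 := by simp [deltaP]

lemma deltaP_shift (m s : ℕ) (γ : ℝ) :
    deltaP m s + (s : ℝ) * γ = ∑ t ∈ range s, ((m : ℝ) + γ - t) := by
  unfold deltaP
  have h : (s : ℝ) * γ = ∑ _t ∈ range s, γ := by
    rw [Finset.sum_const, card_range, nsmul_eq_mul]
  rw [h, ← Finset.sum_add_distrib]
  exact Finset.sum_congr rfl fun t _ => by ring

lemma re_eq_abs_imp (z : ℂ) (h : z.re = ‖z‖) : z = ((‖z‖ : ℝ) : ℂ) := by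
  have him : z.im = 0 := by
    apply Complex.abs_re_eq_norm.mp
    rw [abs_of_nonneg (h ▸ norm_nonneg z), h]
  apply Complex.ext
  · simpa using h
  · simpa using him

/-- The enumeration of a finset of `Fin n` as a plain function `Fin s.card → Fin n`. -/
def gmap {n : ℕ} (s : Finset (Fin n)) (p : Fin s.card) : Fin n :=
  ((s.orderIsoOfFin rfl p : {y // y ∈ s}) : Fin n)

lemma gmap_inj {n : ℕ} (s : Finset (Fin n)) : Function.Injective (gmap s) :=
  fun _ _ h => (s.orderIsoOfFin rfl).injective (Subtype.ext h)

lemma gmap_mem {n : ℕ} (s : Finset (Fin n)) (p : Fin s.card) : gmap s p ∈ s :=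
  (s.orderIsoOfFin rfl p).2

lemma gmap_image_subset {n : ℕ} (s : Finset (Fin n)) (S : Finset (Fin s.card)) :
    S.image (gmap s) ⊆ s := fun i hi => by
  obtain ⟨p, _, rfl⟩ := Finset.mem_image.mp hi; exact gmap_mem s p

lemma gmap_image_card {n : ℕ} (s : Finset (Fin n)) (S : Finset (Fin s.card)) :
    (S.image (gmap s)).card = S.card :=
  Finset.card_image_of_injective _ (gmap_inj s)

lemma gmap_image_sum {n : ℕ} (s : Finset (Fin n)) (f : Fin n → ℝ) (S : Finset (Fin s.card)) :
    ∑ i ∈ S.image (gmap s), f i = ∑ p ∈ S, f (gmap s p) :=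
  Finset.sum_image (fun _ _ _ _ h => gmap_inj s h)

lemma gmap_image_eq_iff {n : ℕ} (s : Finset (Fin n)) (S : Finset (Fin s.card)) :
    S.image (gmap s) = s ↔ S = Finset.univ := by
  constructor
  · intro h
    apply Finset.eq_univ_of_card
    rw [← gmap_image_card s S, h, Fintype.card_fin]
  · rintro rfl
    apply Finset.eq_of_subset_of_card_le (gmap_image_subset s _)
    rw [gmap_image_card]; simp

lemma gmap_surj {n : ℕ} (s : Finset (Fin n)) (T : Finset (Fin n)) (hT : T ⊆ s) :
    ∃ S : Finset (Fin s.card), T = S.image (gmap s) := by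
  refine ⟨Finset.univ.filter (fun p => gmap s p ∈ T), ?_⟩
  ext i
  simp only [Finset.mem_image, Finset.mem_filter, Finset.mem_univ, true_and]
  constructor
  · intro hi
    exact ⟨(s.orderIsoOfFin rfl).symm ⟨i, hT hi⟩, by simp [gmap, hi], by simp [gmap]⟩
  · rintro ⟨p, hp, rfl⟩; exact hp

namespace DecChain
variable {r n : ℕ} (c : DecChain r n)

lemma monoLe (j j' : Fin c.len) (h : j ≤ j') : c.I j ⊆ c.I j' := by
  rcases eq_or_lt_of_le h with h' | h'
  · rw [h']
  · exact (c.mono j j' h').subset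

/-- The `jn`-th set of the chain, as a function of a bare natural number
(`∅` for `jn = 0` or `jn > len`). -/
def IA (jn : ℕ) : Finset (Fin n) :=
  if h : 0 < jn ∧ jn ≤ c.len then c.I ⟨jn - 1, by omega⟩ else ∅

lemma IA_zero : c.IA 0 = ∅ := by simp [IA]

lemma IA_succ (jn : ℕ) (h : jn < c.len) : c.IA (jn + 1) = c.I ⟨jn, h⟩ := by
  rw [IA, dif_pos (by omega : 0 < jn + 1 ∧ jn + 1 ≤ c.len)]
  rfl

lemma prev_eq (j : Fin c.len) : c.prev j = c.IA j.val := by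
  unfold prev IA
  rcases Nat.eq_zero_or_pos j.val with h | h
  · rw [if_pos h, dif_neg (by omega)]
  · rw [if_neg (by omega), dif_pos ⟨h, le_of_lt j.isLt⟩]

lemma top_eq_of_pos (h : 0 < c.len) : c.top = c.I ⟨c.len - 1, by omega⟩ := by
  apply le_antisymm
  · exact Finset.sup_le fun j _ => c.monoLe j _ (by rw [Fin.le_def]; simp; omega)
  · exact Finset.le_sup (Finset.mem_univ _)

lemma top_eq_IA : c.top = c.IA c.len := by
  rcases Nat.eq_zero_or_pos c.len with h | h
  · have huniv : (Finset.univ : Finset (Fin c.len)) = ∅ :=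
      Finset.univ_eq_empty_iff.mpr ⟨fun j => absurd j.isLt (by omega)⟩
    simp [top, IA, huniv, h]
  · have h1 : c.IA c.len = c.I ⟨c.len - 1, by omega⟩ := by simp [IA, h]
    rw [h1]
    exact c.top_eq_of_pos h

lemma prev_subset (j : Fin c.len) : c.prev j ⊆ c.I j := by
  unfold prev
  rcases Nat.eq_zero_or_pos j.val with h | h
  · rw [if_pos h]; exact Finset.empty_subset _
  · rw [if_neg (by omega)]
    exact c.monoLe _ j (by rw [Fin.le_def]; simp)

lemma I_subset_top (j : Fin c.len) : c.I j ⊆ c.top :=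
  Finset.le_iff_subset.mp (Finset.le_sup (Finset.mem_univ _))

lemma top_card_le : c.top.card ≤ n := by
  simpa using Finset.card_le_univ c.top

end DecChain

/-- Proposition 7.11: for `x ∈ ℂ^n`, membership `x ∈ F_I` is equivalent to
(C1') the coordinates indexed by `[n] ∖ I_k` form a point of `Δ^r_{n−|I_k|}`,
(C2') `x_i ∈ ℝ≥0 · ζ^{-a(i)}` for all `i ∈ I_k`, and (C3') for every `j`, the vector
`(|x_i|)_{i ∈ I_j∖I_{j-1}}` lies in the shifted permutohedron `Π_{|I_j∖I_{j-1}|} + γ_j`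
with `γ_j = n − |I_j|`. -/
theorem stmt6 (r n : ℕ) (hr : 2 ≤ r) (hn : 1 ≤ n) (ζ : ℂ) (hζ : IsPrimitiveRoot ζ r)
    (c : DecChain r n) (x : Fin n → ℂ) :
    x ∈ Fface ζ c ↔
      ((∀ i : Fin n, i ∉ c.top → x i ∈ Yset r) ∧
       (∀ I : Finset (Fin n), (∀ i ∈ I, i ∉ c.top) →
          ∑ i ∈ I, ‖x i‖ ≤ deltaP (n - c.top.card) I.card) ∧
       (∀ (i : Fin n) (h : i ∈ c.top), ∃ t : ℝ, 0 ≤ t ∧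
          x i = (t : ℂ) * ζ ^ (-(((c.dec i h).val : ℤ)))) ∧
       (∀ j : Fin c.len,
          (fun p => ‖x (((c.I j \ c.prev j).orderIsoOfFin rfl p : {y // y ∈ c.I j \ c.prev j}) : Fin n)‖)
            ∈ shiftedPerm ((c.I j \ c.prev j).card) ((n - (c.I j).card : ℕ) : ℝ))) := by
  classical
  have hr0 : r ≠ 0 := by omega
  have hζ0 : ζ ≠ 0 := hζ.ne_zero hr0
  have hζabs : ‖ζ‖ = 1 := by
    have h := Complex.norm_eq_one_of_pow_eq_one hζ.pow_eq_one hr0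
    exact h
  have hqn : c.top.card ≤ n := c.top_card_le
  set A : Fin n → ℂ := fun i => if h : i ∈ c.top then ζ ^ (c.dec i h).val else 1 with hAdef
  have hA_val : ∀ (i : Fin n) (h : i ∈ c.top), A i = ζ ^ (c.dec i h).val := fun i h => dif_pos h
  have hA_abs : ∀ i, ‖A i‖ = 1 := by
    intro i
    by_cases h : i ∈ c.top
    · rw [hA_val i h, norm_pow, hζabs, one_pow]
    · simp [hAdef, h]
  have hattach : ∀ j : Fin c.len,
      (∑ i ∈ (c.I j).attach, ζ ^ (c.dec i.1 (c.mem_top j i.2)).val * x i.1)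
        = ∑ i ∈ c.I j, A i * x i := by
    intro j
    rw [← Finset.sum_attach (c.I j) (fun i => A i * x i)]
    exact Finset.sum_congr rfl fun i _ => by rw [hA_val i.1 (c.mem_top j i.2)]
  have hIcard : ∀ j : Fin c.len,
      (c.I j).card = (c.prev j).card + (c.I j \ c.prev j).card := by
    intro j
    rw [add_comm, Finset.card_sdiff_add_card_eq_card (c.prev_subset j)]
  have hIcard_le : ∀ j : Fin c.len, (c.I j).card ≤ n := fun j => by
    simpa using Finset.card_le_univ (c.I j)
  have hRHS : ∀ (j : Fin c.len) (s : ℕ),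
      deltaP (c.I j \ c.prev j).card s + (s : ℝ) * ((n - (c.I j).card : ℕ) : ℝ)
        = deltaP n ((c.prev j).card + s) - deltaP n (c.prev j).card := by
    intro j s
    have h2 : ((n - (c.I j).card : ℕ) : ℝ) = (n : ℝ) - ((c.I j).card : ℝ) :=
      Nat.cast_sub (hIcard_le j)
    have h3 : ((c.I j).card : ℝ)
        = ((c.prev j).card : ℝ) + ((c.I j \ c.prev j).card : ℝ) := by
      exact_mod_cast hIcard j
    rw [deltaP_shift, deltaP_add_s6, add_sub_cancel_left]
    refine Finset.sum_congr rfl fun t _ => ?_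
    rw [h2, h3]; ring
  simp only [Fface, permComplex, shiftedPerm, Set.mem_setOf_eq]
  constructor
  · rintro ⟨⟨hY, hΔ⟩, hH'⟩
    have hH : ∀ j, ∑ i ∈ c.I j, A i * x i = ((deltaP n (c.I j).card : ℝ) : ℂ) := by
      intro j; rw [← hattach j]; exact hH' j
    have halign : ∀ i ∈ c.top, A i * x i = ((‖x i‖ : ℝ) : ℂ) := by
      rcases Nat.eq_zero_or_pos c.len with h0 | hpos
      · intro i hi
        rw [c.top_eq_IA, h0, c.IA_zero] at hi
        exact absurd hi (Finset.notMem_empty i)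
      · set jk : Fin c.len := ⟨c.len - 1, by omega⟩ with hjkdef
        have htop : c.top = c.I jk := c.top_eq_of_pos hpos
        have hre : ∑ i ∈ c.top, (A i * x i).re = deltaP n c.top.card := by
          have h1 := congrArg Complex.re (hH jk)
          rw [Complex.re_sum, Complex.ofReal_re] at h1
          rw [htop]
          exact h1
        have haux : ∀ i ∈ c.top, (A i * x i).re ≤ ‖x i‖ := by
          intro i hi
          refine (Complex.re_le_norm _).trans ?_
          rw [norm_mul, hA_abs, one_mul]
        have hsumtop : ∑ i ∈ c.top, ‖x i‖ = deltaP n c.top.card :=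
          le_antisymm (hΔ c.top) (hre ▸ Finset.sum_le_sum haux)
        have heach := (Finset.sum_eq_sum_iff_of_le haux).mp (hre.trans hsumtop.symm)
        intro i hi
        have h1 : (A i * x i).re = ‖A i * x i‖ := by
          rw [norm_mul, hA_abs, one_mul]; exact heach i hi
        have h2 := re_eq_abs_imp _ h1
        rwa [norm_mul, hA_abs, one_mul] at h2
    have hsumI : ∀ j : Fin c.len,
        ∑ i ∈ c.I j, ‖x i‖ = deltaP n (c.I j).card := by
      intro j
      have h1 : ∑ i ∈ c.I j, ((‖x i‖ : ℝ) : ℂ)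
          = ((deltaP n (c.I j).card : ℝ) : ℂ) := by
        rw [← hH j]
        exact Finset.sum_congr rfl fun i hi => (halign i (c.I_subset_top j hi)).symm
      rw [← Complex.ofReal_sum] at h1
      exact_mod_cast h1
    have hsumtop' : ∑ i ∈ c.top, ‖x i‖ = deltaP n c.top.card := by
      rcases Nat.eq_zero_or_pos c.len with h0 | hpos
      · rw [c.top_eq_IA, h0, c.IA_zero]
        simp [deltaP_zero]
      · rw [c.top_eq_of_pos hpos]
        exact hsumI _
    have hprev_sum : ∀ j : Fin c.len,
        ∑ i ∈ c.prev j, ‖x i‖ = deltaP n (c.prev j).card := by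
      intro j
      by_cases h : (j : ℕ) = 0
      · simp only [DecChain.prev, if_pos h]
        simp [deltaP_zero]
      · simp only [DecChain.prev, if_neg h]
        exact hsumI _
    have hblockT_le : ∀ (j : Fin c.len) (T : Finset (Fin n)), T ⊆ c.I j \ c.prev j →
        ∑ i ∈ T, ‖x i‖
          ≤ deltaP n ((c.prev j).card + T.card) - deltaP n (c.prev j).card := by
      intro j T hT
      have hdisj : Disjoint (c.prev j) T :=
        Finset.disjoint_sdiff.mono_right (Finset.le_iff_subset.mpr hT)
      have h1 := hΔ (c.prev j ∪ T)
      rw [Finset.sum_union hdisj, Finset.card_union_of_disjoint hdisj] at h1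
      have h2 := hprev_sum j
      linarith
    have hblockT_eq : ∀ j : Fin c.len,
        ∑ i ∈ c.I j \ c.prev j, ‖x i‖
          = deltaP n ((c.prev j).card + (c.I j \ c.prev j).card)
            - deltaP n (c.prev j).card := by
      intro j
      have h1 := Finset.sum_sdiff (f := fun i => ‖x i‖) (c.prev_subset j)
      have h2 := hsumI j
      rw [← hIcard j]
      have h3 := hprev_sum j
      linarith
    refine ⟨fun i _ => hY i, ?_, ?_, ?_⟩
    · intro I hI
      have hdisj : Disjoint c.top I := Finset.disjoint_right.mpr hI
      have h1 := hΔ (c.top ∪ I)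
      rw [Finset.sum_union hdisj, Finset.card_union_of_disjoint hdisj] at h1
      have h2 : deltaP n (c.top.card + I.card) - deltaP n c.top.card
          = ∑ t ∈ range I.card, ((n : ℝ) - c.top.card - t) := by
        rw [deltaP_add_s6, add_sub_cancel_left]
      have h3 : deltaP (n - c.top.card) I.card
          = ∑ t ∈ range I.card, ((n : ℝ) - c.top.card - t) := by
        unfold deltaP
        refine Finset.sum_congr rfl fun t _ => ?_
        rw [Nat.cast_sub hqn]
      rw [h3]
      linarith [hsumtop']
    · intro i h
      refine ⟨‖x i‖, norm_nonneg _, ?_⟩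
      have h1 : ζ ^ (c.dec i h).val * x i = ((‖x i‖ : ℝ) : ℂ) := by
        rw [← hA_val i h]; exact halign i h
      have hne : ζ ^ (c.dec i h).val ≠ 0 := pow_ne_zero _ hζ0
      rw [zpow_neg, zpow_natCast, eq_mul_inv_iff_mul_eq₀ hne, mul_comm]
      exact h1
    · intro j
      constructor
      · intro S _
        have hsub : S.image (gmap (c.I j \ c.prev j)) ⊆ c.I j \ c.prev j :=
          gmap_image_subset _ _
        have h1 := hblockT_le j _ hsub
        rw [gmap_image_sum _ (fun i => ‖x i‖), gmap_image_card] at h1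
        rw [hRHS j S.card]
        exact h1
      · have himg : (Finset.univ : Finset (Fin (c.I j \ c.prev j).card)).image
            (gmap (c.I j \ c.prev j)) = c.I j \ c.prev j :=
          (gmap_image_eq_iff _ _).mpr rfl
        have hsum : ∑ i ∈ c.I j \ c.prev j, ‖x i‖
            = ∑ p, ‖x (gmap (c.I j \ c.prev j) p)‖ := by
          conv_lhs => rw [← himg]
          exact gmap_image_sum _ _ _
        rw [hRHS j (c.I j \ c.prev j).card]
        exact hsum.symm.trans (hblockT_eq j)
  · rintro ⟨hC1a, hC1b, hC2, hC3⟩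
    have halign : ∀ (i : Fin n) (h : i ∈ c.top),
        A i * x i = ((‖x i‖ : ℝ) : ℂ) := by
      intro i h
      obtain ⟨t, ht, hx⟩ := hC2 i h
      have hzabs : ‖ζ ^ (-(((c.dec i h).val : ℤ)))‖ = 1 := by
        rw [norm_zpow, hζabs, one_zpow]
      have habs : ‖x i‖ = t := by
        rw [hx, norm_mul, hzabs, mul_one, Complex.norm_of_nonneg ht]
      have hmul : ζ ^ ((c.dec i h).val) * ζ ^ (-(((c.dec i h).val : ℤ))) = 1 := by
        rw [zpow_neg, zpow_natCast, mul_inv_cancel₀ (pow_ne_zero _ hζ0)]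
      rw [hA_val i h, habs, hx, mul_left_comm, hmul, mul_one]
    have hY' : ∀ i, x i ∈ Yset r := by
      intro i
      by_cases h : i ∈ c.top
      · obtain ⟨t, ht, hx⟩ := hC2 i h
        refine ⟨t, ht, ζ ^ (-(((c.dec i h).val : ℤ))), ?_, hx⟩
        rw [← zpow_natCast (ζ ^ (-(((c.dec i h).val : ℤ)))) r, ← zpow_mul, mul_comm,
          zpow_mul, zpow_natCast, hζ.pow_eq_one, one_zpow]
      · exact hC1a i h
    have hblock_le : ∀ (j : Fin c.len) (T : Finset (Fin n)), T ⊆ c.I j \ c.prev j →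
        ∑ i ∈ T, ‖x i‖
          ≤ deltaP n ((c.prev j).card + T.card) - deltaP n (c.prev j).card := by
      intro j T hT
      obtain ⟨S, rfl⟩ := gmap_surj _ T hT
      rw [gmap_image_sum _ (fun i => ‖x i‖), gmap_image_card, ← hRHS j S.card]
      by_cases hS : S = Finset.univ
      · subst hS
        have h2 := (hC3 j).2
        rw [Finset.card_univ, Fintype.card_fin]
        exact le_of_eq h2
      · exact (hC3 j).1 S hS
    have hblock_eq : ∀ j : Fin c.len,
        ∑ i ∈ c.I j \ c.prev j, ‖x i‖
          = deltaP n ((c.prev j).card + (c.I j \ c.prev j).card)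
            - deltaP n (c.prev j).card := by
      intro j
      have himg : (Finset.univ : Finset (Fin (c.I j \ c.prev j).card)).image
          (gmap (c.I j \ c.prev j)) = c.I j \ c.prev j :=
        (gmap_image_eq_iff _ _).mpr rfl
      have hsum : ∑ i ∈ c.I j \ c.prev j, ‖x i‖
          = ∑ p, ‖x (gmap (c.I j \ c.prev j) p)‖ := by
        conv_lhs => rw [← himg]
        exact gmap_image_sum _ _ _
      have h2 := (hC3 j).2
      rw [← hRHS j (c.I j \ c.prev j).card]
      exact hsum.trans h2
    have hsumI : ∀ j : Fin c.len,
        ∑ i ∈ c.I j, ‖x i‖ = deltaP n (c.I j).card := by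
      have key : ∀ jn : ℕ, ∀ h : jn < c.len,
          ∑ i ∈ c.I ⟨jn, h⟩, ‖x i‖ = deltaP n (c.I ⟨jn, h⟩).card := by
        intro jn
        induction jn with
        | zero =>
          intro h
          have hp : c.prev ⟨0, h⟩ = ∅ := if_pos rfl
          have h1 := hblock_eq ⟨0, h⟩
          rw [hp, Finset.sdiff_empty] at h1
          simpa [deltaP_zero] using h1
        | succ k ih =>
          intro h
          have hk : k < c.len := by omega
          have hp : c.prev ⟨k + 1, h⟩ = c.I ⟨k, hk⟩ := by
            simp only [DecChain.prev]
            rw [if_neg (by simp)]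
            rfl
          have h1 := hblock_eq ⟨k + 1, h⟩
          have h2 := Finset.sum_sdiff (f := fun i => ‖x i‖)
            (c.prev_subset ⟨k + 1, h⟩)
          have h3 := ih hk
          have hc := hIcard ⟨k + 1, h⟩
          rw [hp] at h1 h2 hc
          rw [hc]
          linarith
      intro j
      exact key j.1 j.2
    have hP : ∀ jn : ℕ, jn ≤ c.len → ∀ S : Finset (Fin n), S ⊆ c.IA jn →
        ∑ i ∈ S, ‖x i‖ ≤ deltaP n S.card := by
      intro jn
      induction jn with
      | zero =>
        intro _ S hS
        rw [c.IA_zero, Finset.subset_empty] at hS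
        subst hS
        simp [deltaP_zero]
      | succ k ih =>
        intro hk S hS
        have hk' : k < c.len := hk
        set j : Fin c.len := ⟨k, hk'⟩ with hj
        rw [c.IA_succ k hk'] at hS
        have hprevIA : c.prev j = c.IA k := c.prev_eq j
        have hS' : S \ (c.I j \ c.prev j) ⊆ c.prev j := by
          intro i hi
          rw [Finset.mem_sdiff, Finset.mem_sdiff] at hi
          rcases hi with ⟨hiS, hni⟩
          by_cases hpv : i ∈ c.prev j
          · exact hpv
          · exact absurd ⟨hS hiS, hpv⟩ hni
        have h1 : ∑ i ∈ S \ (c.I j \ c.prev j), ‖x i‖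
            ≤ deltaP n (S \ (c.I j \ c.prev j)).card :=
          ih (by omega) _ (hprevIA ▸ hS')
        have h2 := hblock_le j (S ∩ (c.I j \ c.prev j)) Finset.inter_subset_right
        have hcards := Finset.card_inter_add_card_sdiff S (c.I j \ c.prev j)
        have hsums := Finset.sum_inter_add_sum_sdiff S (c.I j \ c.prev j)
          (fun i => ‖x i‖)
        have hBS : (S \ (c.I j \ c.prev j)).card ≤ (c.prev j).card :=
          Finset.card_le_card hS'
        have hmono : deltaP n ((c.prev j).card + (S ∩ (c.I j \ c.prev j)).card)
              - deltaP n (c.prev j).card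
            ≤ deltaP n ((S \ (c.I j \ c.prev j)).card + (S ∩ (c.I j \ c.prev j)).card)
              - deltaP n (S \ (c.I j \ c.prev j)).card := by
          rw [deltaP_add_s6, add_sub_cancel_left, deltaP_add_s6, add_sub_cancel_left]
          refine Finset.sum_le_sum fun t _ => ?_
          have hc : ((S \ (c.I j \ c.prev j)).card : ℝ) ≤ ((c.prev j).card : ℝ) := by
            exact_mod_cast hBS
          linarith
        have hfin : deltaP n ((S \ (c.I j \ c.prev j)).card
              + (S ∩ (c.I j \ c.prev j)).card) = deltaP n S.card := by
          have hcc : (S \ (c.I j \ c.prev j)).card + (S ∩ (c.I j \ c.prev j)).card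
              = S.card := by omega
          rw [hcc]
        linarith
    have hΔ' : ∀ I : Finset (Fin n), ∑ i ∈ I, ‖x i‖ ≤ deltaP n I.card := by
      intro I
      have h1 : I ∩ c.top ⊆ c.IA c.len := by
        rw [← c.top_eq_IA]; exact Finset.inter_subset_right
      have hSle := hP c.len le_rfl _ h1
      have hJ := hC1b (I \ c.top) (fun i hi => (Finset.mem_sdiff.mp hi).2)
      have hScard : (I ∩ c.top).card ≤ c.top.card :=
        Finset.card_le_card Finset.inter_subset_right
      have h3 : deltaP (n - c.top.card) (I \ c.top).card
          ≤ deltaP n ((I ∩ c.top).card + (I \ c.top).card) - deltaP n (I ∩ c.top).card := by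
        rw [deltaP_add_s6, add_sub_cancel_left]
        unfold deltaP
        refine Finset.sum_le_sum fun t _ => ?_
        have h4 : ((n - c.top.card : ℕ) : ℝ) = (n : ℝ) - c.top.card := Nat.cast_sub hqn
        have h5 : ((I ∩ c.top).card : ℝ) ≤ (c.top.card : ℝ) := by exact_mod_cast hScard
        rw [h4]
        linarith
      have hsums := Finset.sum_inter_add_sum_sdiff I c.top (fun i => ‖x i‖)
      have hcards := Finset.card_inter_add_card_sdiff I c.top
      have hfin : deltaP n ((I ∩ c.top).card + (I \ c.top).card) = deltaP n I.card := by
        rw [hcards]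
      linarith
    refine ⟨⟨hY', hΔ'⟩, ?_⟩
    intro j
    rw [hattach j]
    have h1 : ∑ i ∈ c.I j, A i * x i = ∑ i ∈ c.I j, ((‖x i‖ : ℝ) : ℂ) :=
      Finset.sum_congr rfl fun i hi => halign i (c.I_subset_top j hi)
    rw [h1, ← Complex.ofReal_sum, hsumI j]
end
end

section
/- Let I = (I_1,…,I_n,a) be a maximal decorated nested chain of length n (so |I_j| = j for every j and I_n = {1,…,n}), and for each j ∈ {1,…,n} write I_j∖I_{j−1} = {i_j}. Then the point x = (x_1,…,x_n) ∈ ℂ^n defined by x_{i_j} := ζ^{−a(i_j)}·(n+1−j) lies in F_I. In particular, the Δ-face F_I associated to any decorated nested chain is nonempty. -/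
open Finset

noncomputable section

lemma aux_sum_range_card (u : Finset ℕ) : ∑ m ∈ Finset.range u.card, m ≤ ∑ m ∈ u, m := by
  induction u using Finset.strongInduction with
  | _ u ih =>
    rcases u.eq_empty_or_nonempty with rfl | hu
    · simp
    · have hM : u.max' hu ∈ u := u.max'_mem hu
      have h1 : (u.erase (u.max' hu)).card = u.card - 1 := Finset.card_erase_of_mem hM
      have h2 := ih _ (Finset.erase_ssubset hM)
      rw [h1] at h2
      have hMax : u.card - 1 ≤ u.max' hu := by
        have hsub : u ⊆ Finset.range (u.max' hu + 1) := fun m hm =>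
          Finset.mem_range.2 (Nat.lt_succ_of_le (Finset.le_max' u m hm))
        have := Finset.card_le_card hsub
        simp only [Finset.card_range] at this
        omega
      have hc : 0 < u.card := Finset.card_pos.2 hu
      have e1 : ∑ m ∈ u, m = u.max' hu + ∑ m ∈ u.erase (u.max' hu), m :=
        (Finset.add_sum_erase u id hM).symm
      have e2 : ∑ m ∈ Finset.range u.card, m
          = (u.card - 1) + ∑ m ∈ Finset.range (u.card - 1), m := by
        conv_lhs => rw [show u.card = (u.card - 1) + 1 by omega]
        rw [Finset.sum_range_succ]
        omega
      rw [e1, e2]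
      exact Nat.add_le_add hMax h2

lemma core_mem {r n : ℕ} (hr : 1 ≤ r) {ζ : ℂ} (hζ1 : ζ ^ r = 1)
    (d : DecChain r n) (ord : Fin n → ℕ)
    (hlt : ∀ i ∈ d.top, ord i < n)
    (hinj : ∀ i ∈ d.top, ∀ i' ∈ d.top, ord i = ord i' → i = i')
    (hseg : ∀ j : Fin d.len, (d.I j).image ord = Finset.range (d.I j).card)
    (x : Fin n → ℂ)
    (hx : ∀ (i : Fin n) (hi : i ∈ d.top),
      x i = ζ ^ (-(((d.dec i hi).val : ℤ))) * ((n - ord i : ℕ) : ℂ))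
    (hx0 : ∀ i, i ∉ d.top → x i = 0) :
    x ∈ Fface ζ d := by
  classical
  have hζ0 : ζ ≠ 0 := by
    intro h
    rw [h, zero_pow (by omega : r ≠ 0)] at hζ1
    exact zero_ne_one hζ1
  have habs1 : ‖ζ‖ = 1 := by
    have h := congrArg (‖·‖) hζ1
    rw [norm_pow, norm_one] at h
    rcases (pow_eq_one_iff_cases).1 h with h | h | h
    · omega
    · exact h
    · exfalso
      have := norm_nonneg ζ
      rw [h.1] at this
      linarith
  have hsubtop : ∀ j : Fin d.len, d.I j ⊆ d.top := fun j i h => d.mem_top j h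
  refine ⟨⟨?_, ?_⟩, ?_⟩
  · -- Yset membership
    intro i
    by_cases hi : i ∈ d.top
    · refine ⟨((n - ord i : ℕ) : ℝ), Nat.cast_nonneg _,
        ζ ^ (-(((d.dec i hi).val : ℤ))), ?_, ?_⟩
      · rw [zpow_neg, zpow_natCast, inv_pow, ← pow_mul, mul_comm, pow_mul, hζ1, one_pow, inv_one]
      · rw [hx i hi, mul_comm]
        norm_num
    · exact ⟨0, le_refl 0, 1, one_pow r, by rw [hx0 i hi]; simp⟩
  · -- subset inequalities
    intro S
    have hSn : S.card ≤ n := by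
      have := Finset.card_le_univ S
      simpa using this
    set T := S.filter (fun i => i ∈ d.top) with hT
    have hTS : T ⊆ S := Finset.filter_subset _ _
    have hTtop : ∀ i ∈ T, i ∈ d.top := fun i hi => (Finset.mem_filter.1 hi).2
    have hsum0 : ∑ i ∈ S, ‖x i‖ = ∑ i ∈ T, ‖x i‖ := by
      refine (Finset.sum_subset hTS fun i hiS hiT => ?_).symm
      have hnt : i ∉ d.top := fun h => hiT (Finset.mem_filter.2 ⟨hiS, h⟩)
      rw [hx0 i hnt, norm_zero]
    have habs : ∀ i ∈ T, ‖x i‖ = (n : ℝ) - ord i := by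
      intro i hi
      have hit := hTtop i hi
      rw [hx i hit, norm_mul, norm_zpow, habs1, one_zpow, one_mul, Complex.norm_natCast,
        Nat.cast_sub (le_of_lt (hlt i hit))]
    have hTn : T.card ≤ S.card := Finset.card_le_card hTS
    have hinjT : Set.InjOn ord T := fun a ha b hb =>
      hinj a (hTtop a ha) b (hTtop b hb)
    have hordsum : ∑ m ∈ Finset.range T.card, (m : ℝ) ≤ ∑ i ∈ T, (ord i : ℝ) := by
      have hN : ∑ m ∈ Finset.range T.card, m ≤ ∑ i ∈ T, ord i := by
        have himg : (T.image ord).card = T.card := Finset.card_image_of_injOn hinjT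
        calc ∑ m ∈ Finset.range T.card, m
            = ∑ m ∈ Finset.range (T.image ord).card, m := by rw [himg]
          _ ≤ ∑ m ∈ T.image ord, m := aux_sum_range_card _
          _ = ∑ i ∈ T, ord i := Finset.sum_image fun a ha b hb => hinjT ha hb
      have hN' := (Nat.cast_le (α := ℝ)).2 hN
      push_cast at hN'
      exact hN'
    calc ∑ i ∈ S, ‖x i‖ = ∑ i ∈ T, ‖x i‖ := hsum0
      _ = ∑ i ∈ T, ((n : ℝ) - ord i) := Finset.sum_congr rfl habs
      _ = T.card * n - ∑ i ∈ T, (ord i : ℝ) := by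
          rw [Finset.sum_sub_distrib, Finset.sum_const, nsmul_eq_mul]
      _ ≤ T.card * n - ∑ m ∈ Finset.range T.card, (m : ℝ) := by linarith
      _ = ∑ m ∈ Finset.range T.card, ((n : ℝ) - m) := by
          rw [Finset.sum_sub_distrib, Finset.sum_const, Finset.card_range, nsmul_eq_mul]
      _ ≤ ∑ m ∈ Finset.range S.card, ((n : ℝ) - m) := by
          refine Finset.sum_le_sum_of_subset_of_nonneg
            (Finset.range_subset_range.2 hTn) (fun m hm _ => ?_)
          have h1 : m < S.card := Finset.mem_range.1 hm
          have h2 : (m : ℝ) ≤ n := by exact_mod_cast le_of_lt (lt_of_lt_of_le h1 hSn)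
          linarith
      _ = deltaP n S.card := rfl
  · -- hyperplane equalities
    intro j
    have hcardn : (d.I j).card ≤ n := by
      have := Finset.card_le_univ (d.I j)
      simpa using this
    calc ∑ i ∈ (d.I j).attach, ζ ^ (d.dec i.1 (d.mem_top j i.2)).val * x i.1
        = ∑ i ∈ (d.I j).attach, ((n - ord i.1 : ℕ) : ℂ) := by
          refine Finset.sum_congr rfl fun i _ => ?_
          have hti : i.1 ∈ d.top := d.mem_top j i.2
          rw [hx i.1 hti, zpow_neg, zpow_natCast, ← mul_assoc,
            mul_inv_cancel₀ (pow_ne_zero _ hζ0), one_mul]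
      _ = ∑ i ∈ d.I j, ((n - ord i : ℕ) : ℂ) := Finset.sum_attach (d.I j) (fun i => ((n - ord i : ℕ) : ℂ))
      _ = ∑ m ∈ (d.I j).image ord, ((n - m : ℕ) : ℂ) := by
          rw [Finset.sum_image (f := fun m => ((n - m : ℕ) : ℂ))
            (fun a ha b hb h => hinj a (hsubtop j ha) b (hsubtop j hb) h)]
      _ = ∑ m ∈ Finset.range (d.I j).card, ((n - m : ℕ) : ℂ) := by rw [hseg j]
      _ = (deltaP n (d.I j).card : ℂ) := by
          rw [deltaP]
          push_cast
          refine Finset.sum_congr rfl fun m hm => ?_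
          have hmn : m ≤ n := le_of_lt (lt_of_lt_of_le (Finset.mem_range.1 hm) hcardn)
          rw [Nat.cast_sub hmn]
/-- for a maximal decorated nested chain `I` of length `n` (so
`|I_j| = j` for every `j`), writing `I_j ∖ I_{j-1} = {i_j}` (equivalently, `pos i` is
the first index `j` with `i ∈ I_j`), the point `x` with `x_{i_j} = ζ^{-a(i_j)}·(n+1−j)`
lies in `F_I`; and in particular the Δ-face of every decorated nested chain is
nonempty. -/
theorem stmt7 (r n : ℕ) (hr : 2 ≤ r) (hn : 1 ≤ n) (ζ : ℂ) (hζ : IsPrimitiveRoot ζ r)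
    (c : DecChain r n) (hmax : c.len = n)
    (hcard : ∀ j : Fin c.len, (c.I j).card = (j : ℕ) + 1)
    (pos : Fin n → Fin c.len)
    (hpos : ∀ i : Fin n, i ∈ c.I (pos i) ∧ ∀ j : Fin c.len, j < pos i → i ∉ c.I j)
    (x : Fin n → ℂ)
    (hx : ∀ (i : Fin n) (hi : i ∈ c.top),
      x i = ζ ^ (-(((c.dec i hi).val : ℤ))) * ((n - (pos i : ℕ) : ℕ) : ℂ)) :
    x ∈ Fface ζ c ∧ ∀ d : DecChain r n, (Fface ζ d).Nonempty := by
  classical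
  have hr1 : 1 ≤ r := le_trans one_le_two hr
  have hζ1 : ζ ^ r = 1 := hζ.pow_eq_one
  constructor
  · -- part 1
    have hlastlt : c.len - 1 < c.len := by omega
    set jlast : Fin c.len := ⟨c.len - 1, hlastlt⟩ with hjl
    have hIlast : c.I jlast = Finset.univ := by
      apply Finset.eq_univ_of_card
      rw [hcard jlast, Fintype.card_fin]
      show c.len - 1 + 1 = n
      omega
    have htop : c.top = Finset.univ := by
      apply Finset.eq_univ_iff_forall.2
      intro i
      exact c.mem_top jlast (hIlast ▸ Finset.mem_univ i)
    have hmemiff : ∀ (i : Fin n) (j : Fin c.len), i ∈ c.I j ↔ pos i ≤ j := by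
      intro i j
      constructor
      · intro h
        by_contra hc'
        push_neg at hc'
        exact (hpos i).2 j hc' h
      · intro h
        rcases lt_or_eq_of_le h with h' | h'
        · exact (c.mono _ _ h').subset (hpos i).1
        · exact h' ▸ (hpos i).1
    have hposinj : Function.Injective pos := by
      intro i i' h
      have hi : i ∈ c.I (pos i) := (hpos i).1
      have hi' : i' ∈ c.I (pos i) := by rw [h]; exact (hpos i').1
      rcases Nat.eq_zero_or_pos ((pos i : ℕ)) with hp | hp
      · have h1 : (c.I (pos i)).card ≤ 1 := by rw [hcard]; omega
        exact Finset.card_le_one.1 h1 i hi i' hi'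
      · have hqlt' : (pos i : ℕ) - 1 < c.len := by
          have := (pos i).isLt; omega
        set q : Fin c.len := ⟨(pos i : ℕ) - 1, hqlt'⟩ with hq
        have hqlt : q < pos i := by
          rw [Fin.lt_def]
          show (pos i : ℕ) - 1 < (pos i : ℕ)
          omega
        have hni : i ∉ c.I q := (hpos i).2 q hqlt
        have hni' : i' ∉ c.I q := (hpos i').2 q (h ▸ hqlt)
        have hsub : c.I q ⊆ c.I (pos i) := (c.mono _ _ hqlt).subset
        have hcd : (c.I (pos i) \ c.I q).card ≤ 1 := by
          rw [Finset.card_sdiff_of_subset hsub, hcard, hcard]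
          show (pos i : ℕ) + 1 - ((pos i : ℕ) - 1 + 1) ≤ 1
          omega
        exact Finset.card_le_one.1 hcd i (Finset.mem_sdiff.2 ⟨hi, hni⟩)
          i' (Finset.mem_sdiff.2 ⟨hi', hni'⟩)
    have hseg : ∀ j : Fin c.len,
        (c.I j).image (fun i => (pos i : ℕ)) = Finset.range ((c.I j).card) := by
      intro j
      have hsub : (c.I j).image (fun i => (pos i : ℕ)) ⊆ Finset.range ((c.I j).card) := by
        intro m hm
        obtain ⟨i, hi, rfl⟩ := Finset.mem_image.1 hm
        have hle : pos i ≤ j := (hmemiff i j).1 hi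
        rw [Finset.mem_range, hcard]
        have : (pos i : ℕ) ≤ (j : ℕ) := hle
        omega
      have hcardim : ((c.I j).image (fun i => (pos i : ℕ))).card = (c.I j).card :=
        Finset.card_image_of_injective _ (fun a b hab => hposinj (Fin.val_injective hab))
      exact Finset.eq_of_subset_of_card_le hsub
        (le_of_eq (by rw [Finset.card_range, hcardim]))
    refine core_mem hr1 hζ1 c (fun i => (pos i : ℕ)) ?_ ?_ hseg x ?_ ?_
    · intro i _
      show (pos i : ℕ) < n
      have h1 : (pos i : ℕ) < c.len := (pos i).isLt
      omega
    · intro i _ i' _ h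
      exact hposinj (Fin.val_injective h)
    · exact hx
    · intro i hi
      exact absurd (by rw [htop]; exact Finset.mem_univ i) hi
  · -- part 2
    intro d
    have hex : ∀ i ∈ d.top, (Finset.univ.filter (fun j => i ∈ d.I j)).Nonempty := by
      intro i hi
      obtain ⟨j, -, hj⟩ := Finset.mem_sup.1 (show i ∈ Finset.univ.sup d.I from hi)
      exact ⟨j, Finset.mem_filter.2 ⟨Finset.mem_univ j, hj⟩⟩
    have hmono' : ∀ j j' : Fin d.len, j ≤ j' → d.I j ⊆ d.I j' := by
      intro j j' hjj
      rcases lt_or_eq_of_le hjj with h | h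
      · exact (d.mono _ _ h).subset
      · rw [h]
    set lvl : Fin n → ℕ := fun i =>
      if h : i ∈ d.top then
        ((Finset.univ.filter (fun j => i ∈ d.I j)).min' (hex i h)).val
      else 0 with hlvldef
    have hlvle : ∀ (i : Fin n) (hi : i ∈ d.top),
        lvl i = ((Finset.univ.filter (fun j => i ∈ d.I j)).min' (hex i hi)).val := by
      intro i hi
      simp only [hlvldef]
      rw [dif_pos hi]
    have hlvl_lt : ∀ i : Fin n, i ∈ d.top → lvl i < d.len := by
      intro i hi
      rw [hlvle i hi]
      exact Fin.isLt _
    have hlvl_mem : ∀ (i : Fin n) (hi : i ∈ d.top) (h : lvl i < d.len),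
        i ∈ d.I ⟨lvl i, h⟩ := by
      intro i hi h
      have heq : (⟨lvl i, h⟩ : Fin d.len)
          = (Finset.univ.filter (fun j => i ∈ d.I j)).min' (hex i hi) :=
        Fin.ext (hlvle i hi)
      rw [heq]
      exact (Finset.mem_filter.1 (Finset.min'_mem
        (Finset.univ.filter (fun j => i ∈ d.I j)) (hex i hi))).2
    have hlvl_le : ∀ (i : Fin n) (hi : i ∈ d.top) (j : Fin d.len),
        i ∈ d.I j → lvl i ≤ (j : ℕ) := by
      intro i hi j hj
      rw [hlvle i hi]
      exact Finset.min'_le _ j (Finset.mem_filter.2 ⟨Finset.mem_univ j, hj⟩)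
    have hA : ∀ (i : Fin n) (hi : i ∈ d.top) (j : Fin d.len),
        lvl i ≤ (j : ℕ) → i ∈ d.I j := by
      intro i hi j hle
      have h := hlvl_lt i hi
      exact hmono' ⟨lvl i, h⟩ j hle (hlvl_mem i hi h)
    set w : Fin n → ℕ := fun i => lvl i * n + (i : ℕ) with hwdef
    have hw_inj : ∀ i i' : Fin n, w i = w i' → i = i' := by
      intro i i' h
      have h1 : (i : ℕ) = w i % n := by
        simp only [hwdef]
        rw [mul_comm (lvl i) n, Nat.mul_add_mod, Nat.mod_eq_of_lt i.isLt]
      have h2 : (i' : ℕ) = w i' % n := by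
        simp only [hwdef]
        rw [mul_comm (lvl i') n, Nat.mul_add_mod, Nat.mod_eq_of_lt i'.isLt]
      apply Fin.ext
      rw [h1, h2, h]
    have hw_lvl : ∀ i i' : Fin n, w i' < w i → lvl i' ≤ lvl i := by
      intro i i' h
      by_contra hcon
      push_neg at hcon
      have hkey : lvl i * n + (i : ℕ) < lvl i' * n := by
        calc lvl i * n + (i : ℕ) < lvl i * n + n := by
              have := i.isLt; omega
          _ = (lvl i + 1) * n := by ring
          _ ≤ lvl i' * n := Nat.mul_le_mul_right n hcon
      simp only [hwdef] at h
      omega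
    set ord : Fin n → ℕ := fun i => (d.top.filter (fun i' => w i' < w i)).card with horddef
    have hord_mono : ∀ i ∈ d.top, ∀ i' : Fin n, w i < w i' → ord i < ord i' := by
      intro i hi i' h
      have hsub : d.top.filter (fun i'' => w i'' < w i)
          ⊆ d.top.filter (fun i'' => w i'' < w i') := by
        intro a ha
        obtain ⟨hat, haw⟩ := Finset.mem_filter.1 ha
        exact Finset.mem_filter.2 ⟨hat, lt_trans haw h⟩
      exact Finset.card_lt_card ((Finset.ssubset_iff_of_subset hsub).2
        ⟨i, Finset.mem_filter.2 ⟨hi, h⟩,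
          fun hmem => absurd ((Finset.mem_filter.1 hmem).2) (lt_irrefl _)⟩)
    have hinj2 : ∀ i ∈ d.top, ∀ i' ∈ d.top, ord i = ord i' → i = i' := by
      intro i hi i' hi' h
      rcases lt_trichotomy (w i) (w i') with hw' | hw' | hw'
      · exact absurd h (Nat.ne_of_lt (hord_mono i hi i' hw'))
      · exact hw_inj _ _ hw'
      · exact absurd h.symm (Nat.ne_of_lt (hord_mono i' hi' i hw'))
    have hlt2 : ∀ i ∈ d.top, ord i < n := by
      intro i hi
      have hsub : d.top.filter (fun i' => w i' < w i) ⊆ d.top.erase i := by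
        intro a ha
        obtain ⟨hat, haw⟩ := Finset.mem_filter.1 ha
        refine Finset.mem_erase.2 ⟨fun he => ?_, hat⟩
        rw [he] at haw
        exact lt_irrefl _ haw
      have h1 := Finset.card_le_card hsub
      have h2 : (d.top.erase i).card = d.top.card - 1 := Finset.card_erase_of_mem hi
      have h3 : d.top.card ≤ n := by simpa using Finset.card_le_univ d.top
      have h4 : 0 < d.top.card := Finset.card_pos.2 ⟨i, hi⟩
      simp only [horddef]
      omega
    have hseg2 : ∀ j : Fin d.len, (d.I j).image ord = Finset.range ((d.I j).card) := by
      intro j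
      have hsubtopj : d.I j ⊆ d.top := fun i h => d.mem_top j h
      have hsub : (d.I j).image ord ⊆ Finset.range ((d.I j).card) := by
        intro m hm
        obtain ⟨i, hiI, rfl⟩ := Finset.mem_image.1 hm
        have hit : i ∈ d.top := hsubtopj hiI
        have hf : d.top.filter (fun i' => w i' < w i) ⊆ (d.I j).erase i := by
          intro a ha
          obtain ⟨hat, haw⟩ := Finset.mem_filter.1 ha
          have hl : lvl a ≤ lvl i := hw_lvl i a haw
          have hli : lvl i ≤ (j : ℕ) := hlvl_le i hit j hiI
          refine Finset.mem_erase.2 ⟨fun he => ?_, hA a hat j (le_trans hl hli)⟩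
          rw [he] at haw
          exact lt_irrefl _ haw
        have h1 := Finset.card_le_card hf
        have h2 : ((d.I j).erase i).card = (d.I j).card - 1 :=
          Finset.card_erase_of_mem hiI
        have h4 : 0 < (d.I j).card := Finset.card_pos.2 ⟨i, hiI⟩
        rw [Finset.mem_range]
        simp only [horddef]
        omega
      have hio : Set.InjOn ord (d.I j) := fun a ha b hb h =>
        hinj2 a (hsubtopj ha) b (hsubtopj hb) h
      have hci : ((d.I j).image ord).card = (d.I j).card :=
        Finset.card_image_of_injOn hio
      exact Finset.eq_of_subset_of_card_le hsub
        (le_of_eq (by rw [Finset.card_range, hci]))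
    refine ⟨fun i => if h : i ∈ d.top then
        ζ ^ (-(((d.dec i h).val : ℤ))) * ((n - ord i : ℕ) : ℂ) else 0,
      core_mem hr1 hζ1 d ord hlt2 hinj2 hseg2 _ ?_ ?_⟩
    · intro i hi
      rw [dif_pos hi]
    · intro i hi
      rw [dif_neg hi]
end
end

section
/- Let S ⊆ T and write T∖S = {s_{j_1},…,s_{j_k}} with 0 ≤ j_1 < ⋯ < j_k ≤ n−1 (the case k = 0 allowed, in which case the conditions below are vacuous). Then the subgroup of S(r,n) generated by S consists exactly of those A ∈ S(r,n) such that (a) A_{ab} = 0 whenever there is some m ∈ {1,…,k} with a ≤ j_m < b or b ≤ j_m < a (so A is block-diagonal with diagonal blocks on the index intervals {1,…,j_1}, {j_1+1,…,j_2}, …, {j_k+1,…,n}), and (b) A_{ab} = 1 whenever A_{ab} ≠ 0 and a > j_1 (every nonzero entry outside the first block equals 1). -/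
open Finset

noncomputable section

/-- `S(r,n)`: `n×n` complex matrices with exactly one nonzero entry in each row and in
each column, every nonzero entry being an `r`-th root of unity. -/
def Srn (r n : ℕ) : Set (Matrix (Fin n) (Fin n) ℂ) :=
  {A | (∀ a : Fin n, ∃! b : Fin n, A a b ≠ 0) ∧
       (∀ b : Fin n, ∃! a : Fin n, A a b ≠ 0) ∧
       (∀ a b : Fin n, A a b ≠ 0 → A a b ^ r = 1)}

/-- The generator `s_i` (rows/columns `0,…,n-1` here correspond to `1,…,n` in the paper):
`s_0 = diag(ζ,1,…,1)`, and for `1 ≤ i ≤ n-1`, `s_i` is the permutation matrix of the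
adjacent transposition exchanging (0-based) positions `i-1` and `i`. -/
def sgen {n : ℕ} (ζ : ℂ) (i : ℕ) : Matrix (Fin n) (Fin n) ℂ :=
  if i = 0 then Matrix.diagonal (fun a : Fin n => if (a : ℕ) = 0 then ζ else 1)
  else Matrix.of fun a b : Fin n =>
    if Equiv.swap (i - 1) i (a : ℕ) = (b : ℕ) then (1 : ℂ) else 0

/-- The generating set `T = {s_0, s_1, …, s_{n-1}}`. -/
def Tset {n : ℕ} (ζ : ℂ) : Set (Matrix (Fin n) (Fin n) ℂ) :=
  {M | ∃ i : Fin n, M = sgen ζ (i : ℕ)}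

/-- The subgroup (as a set) generated by a set `S` of matrices: all finite products of
elements of `S` and their inverses. -/
def genBy {n : ℕ} (S : Set (Matrix (Fin n) (Fin n) ℂ)) :
    Set (Matrix (Fin n) (Fin n) ℂ) :=
  {A | ∃ l : List (Matrix (Fin n) (Fin n) ℂ),
    (∀ B ∈ l, ∃ x ∈ S, B = x ∨ B = x⁻¹) ∧ l.prod = A}

namespace Stmt11Aux

variable {n : ℕ}

/-- Monomial matrix with diagonal part `d` and permutation `π` (row `a` has its
nonzero entry `d a` in column `π a`). -/
def mat (d : Fin n → ℂ) (π : Equiv.Perm (Fin n)) : Matrix (Fin n) (Fin n) ℂ :=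
  Matrix.of fun a b => if π a = b then d a else 0

lemma mat_congr {d e : Fin n → ℂ} {π σ : Equiv.Perm (Fin n)}
    (h1 : d = e) (h2 : π = σ) : mat d π = mat e σ := by rw [h1, h2]

lemma mat_mul (d e : Fin n → ℂ) (π σ : Equiv.Perm (Fin n)) :
    mat d π * mat e σ = mat (fun a => d a * e (π a)) (π.trans σ) := by
  ext a c
  simp only [Matrix.mul_apply, mat, Matrix.of_apply]
  rw [Finset.sum_eq_single (π a)]
  · simp [Equiv.trans_apply, mul_ite]; rfl
  · intro b _ hb
    rw [if_neg (Ne.symm hb), zero_mul]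
  · intro h
    exact absurd (Finset.mem_univ _) h

lemma mat_one : mat (fun _ => (1 : ℂ)) (Equiv.refl (Fin n)) = 1 := by
  ext a b
  simp [mat, Matrix.one_apply]; rfl

/-- The permutation respects all the cuts at indices not in `S`. -/
def Pperm (S : Set (Fin n)) (π : Equiv.Perm (Fin n)) : Prop :=
  ∀ j ∉ S, ∀ a : Fin n, a < j ↔ π a < j

/-- The diagonal part: nonzero `r`-th roots of unity, equal to `1` from the first
cut onwards. -/
def Pdiag (r : ℕ) (S : Set (Fin n)) (d : Fin n → ℂ) : Prop :=
  (∀ a, d a ≠ 0) ∧ (∀ a, d a ^ r = 1) ∧ (∀ a : Fin n, (∃ j, j ∉ S ∧ j ≤ a) → d a = 1)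

variable {r : ℕ} {S : Set (Fin n)} {ζ : ℂ}

lemma pperm_refl (S : Set (Fin n)) : Pperm S (Equiv.refl (Fin n)) :=
  fun _ _ _ => Iff.rfl

lemma pperm_trans {π σ : Equiv.Perm (Fin n)} (h1 : Pperm S π) (h2 : Pperm S σ) :
    Pperm S (π.trans σ) :=
  fun j hj a => (h1 j hj a).trans (h2 j hj (π a))

lemma pperm_symm {π : Equiv.Perm (Fin n)} (h : Pperm S π) : Pperm S π.symm := by
  intro j hj a
  have h2 := h j hj (π.symm a)
  rw [Equiv.apply_symm_apply] at h2
  exact h2.symm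

lemma pperm_swap {m : ℕ} (hm : m < n) (hm1 : m + 1 < n)
    (hS : (⟨m + 1, hm1⟩ : Fin n) ∈ S) :
    Pperm S (Equiv.swap (⟨m, hm⟩ : Fin n) ⟨m + 1, hm1⟩) := by
  intro j hj a
  have hjne : (j : ℕ) ≠ m + 1 := by
    intro h
    exact hj ((Fin.ext h : j = ⟨m + 1, hm1⟩) ▸ hS)
  rcases eq_or_ne a ⟨m, hm⟩ with rfl | ha
  · rw [Equiv.swap_apply_left]
    simp only [Fin.lt_def]
    omega
  · rcases eq_or_ne a ⟨m + 1, hm1⟩ with rfl | hb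
    · rw [Equiv.swap_apply_right]
      simp only [Fin.lt_def]
      omega
    · rw [Equiv.swap_apply_of_ne_of_ne ha hb]

lemma pdiag_one : Pdiag r S (fun _ => (1 : ℂ)) :=
  ⟨fun _ => one_ne_zero, fun _ => one_pow r, fun _ _ => rfl⟩

lemma pdiag_mul {d e : Fin n → ℂ} {π : Equiv.Perm (Fin n)}
    (hd : Pdiag r S d) (he : Pdiag r S e) (hπ : Pperm S π) :
    Pdiag r S (fun a => d a * e (π a)) := by
  refine ⟨fun a => mul_ne_zero (hd.1 a) (he.1 (π a)),
    fun a => by show (d a * e (π a)) ^ r = 1; rw [mul_pow, hd.2.1 a, he.2.1 (π a), mul_one], ?_⟩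
  rintro a ⟨j, hj, hja⟩
  show d a * e (π a) = 1
  have h1 : d a = 1 := hd.2.2 a ⟨j, hj, hja⟩
  have h2 : e (π a) = 1 := by
    refine he.2.2 (π a) ⟨j, hj, ?_⟩
    exact le_of_not_gt fun h => absurd ((hπ j hj a).mpr h) (not_lt.mpr hja)
  rw [h1, h2, one_mul]

lemma pdiag_inv {d : Fin n → ℂ} {π : Equiv.Perm (Fin n)}
    (hd : Pdiag r S d) (hπ : Pperm S π) :
    Pdiag r S (fun a => (d (π.symm a))⁻¹) := by
  refine ⟨fun a => inv_ne_zero (hd.1 _),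
    fun a => by show (d (π.symm a))⁻¹ ^ r = 1; rw [inv_pow, hd.2.1, inv_one], ?_⟩
  rintro a ⟨j, hj, hja⟩
  have hle : j ≤ π.symm a := by
    refine le_of_not_gt fun h => ?_
    have := (hπ j hj (π.symm a)).mp h
    rw [Equiv.apply_symm_apply] at this
    exact absurd this (not_lt.mpr hja)
  show (d (π.symm a))⁻¹ = 1
  rw [hd.2.2 _ ⟨j, hj, hle⟩, inv_one]

lemma inv_mat {d : Fin n → ℂ} {π : Equiv.Perm (Fin n)} (hd0 : ∀ a, d a ≠ 0) :
    (mat d π)⁻¹ = mat (fun a => (d (π.symm a))⁻¹) π.symm := by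
  apply Matrix.inv_eq_right_inv
  rw [mat_mul]
  have h1 : (fun a => d a * (d (π.symm (π a)))⁻¹) = fun _ : Fin n => (1 : ℂ) := by
    funext a
    rw [Equiv.symm_apply_apply, mul_inv_cancel₀ (hd0 a)]
  rw [h1, Equiv.self_trans_symm, mat_one]

/-! ### `sgen` in `mat` form -/

lemma swap_val {m : ℕ} (hm : m < n) (hm1 : m + 1 < n) (a : Fin n) :
    ((Equiv.swap (⟨m, hm⟩ : Fin n) ⟨m + 1, hm1⟩ a : Fin n) : ℕ)
      = Equiv.swap m (m + 1) (a : ℕ) := by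
  rcases eq_or_ne a ⟨m, hm⟩ with rfl | ha
  · simp
  · rcases eq_or_ne a ⟨m + 1, hm1⟩ with rfl | hb
    · simp
    · rw [Equiv.swap_apply_of_ne_of_ne ha hb,
        Equiv.swap_apply_of_ne_of_ne (fun h => ha (Fin.ext h)) (fun h => hb (Fin.ext h))]

lemma sgen_succ (ζ : ℂ) {m : ℕ} (hm : m < n) (hm1 : m + 1 < n) :
    (sgen ζ (m + 1) : Matrix (Fin n) (Fin n) ℂ)
      = mat (fun _ => 1) (Equiv.swap (⟨m, hm⟩ : Fin n) ⟨m + 1, hm1⟩) := by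
  ext a b
  rw [sgen, if_neg (Nat.succ_ne_zero m)]
  simp only [Matrix.of_apply, mat, Nat.add_sub_cancel]
  rw [← swap_val hm hm1 a]
  by_cases h : Equiv.swap (⟨m, hm⟩ : Fin n) ⟨m + 1, hm1⟩ a = b
  · rw [if_pos (by rw [h]), if_pos h]
  · rw [if_neg (fun hc => h (Fin.ext hc)), if_neg h]

lemma sgen_zero (ζ : ℂ) (hn : 0 < n) :
    (sgen ζ 0 : Matrix (Fin n) (Fin n) ℂ)
      = mat (fun a => if (a : ℕ) = 0 then ζ else 1) (Equiv.refl (Fin n)) := by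
  ext a b
  rw [sgen, if_pos rfl]
  simp [mat, Matrix.diagonal_apply]; rfl

lemma gen_form (hζne : ζ ≠ 0) (hζr : ζ ^ r = 1) {i : Fin n} (hi : i ∈ S) :
    ∃ d π, Pdiag r S d ∧ Pperm S π ∧ sgen ζ (i : ℕ) = mat d π := by
  cases h : (i : ℕ) with
  | zero =>
    refine ⟨_, _, ?_, pperm_refl S, sgen_zero ζ i.pos⟩
    refine ⟨fun a => ?_, fun a => ?_, fun a ha => ?_⟩
    · dsimp only
      split_ifs
      · exact hζne
      · exact one_ne_zero
    · dsimp only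
      split_ifs
      · exact hζr
      · exact one_pow r
    · dsimp only
      rw [if_neg]
      intro ha0
      obtain ⟨j, hj, hja⟩ := ha
      have hj0 : (j : ℕ) = 0 := by
        have := (Fin.le_def.mp hja)
        omega
      exact hj ((Fin.ext (hj0.trans h.symm) : j = i) ▸ hi)
  | succ m =>
    have hm1 : m + 1 < n := h ▸ i.isLt
    have hm : m < n := by omega
    have hiS : (⟨m + 1, hm1⟩ : Fin n) ∈ S := (Fin.ext h : i = ⟨m + 1, hm1⟩) ▸ hi
    exact ⟨_, _, pdiag_one, pperm_swap hm hm1 hiS, sgen_succ ζ hm hm1⟩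

/-! ### `genBy` closure properties -/

variable {G : Set (Matrix (Fin n) (Fin n) ℂ)}

lemma genBy_one : (1 : Matrix (Fin n) (Fin n) ℂ) ∈ genBy G :=
  ⟨[], fun B hB => absurd hB List.not_mem_nil, List.prod_nil⟩

lemma genBy_mul {A B : Matrix (Fin n) (Fin n) ℂ}
    (hA : A ∈ genBy G) (hB : B ∈ genBy G) : A * B ∈ genBy G := by
  obtain ⟨l1, h1, rfl⟩ := hA
  obtain ⟨l2, h2, rfl⟩ := hB
  refine ⟨l1 ++ l2, fun C hC => ?_, List.prod_append⟩
  rcases List.mem_append.mp hC with h | h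
  · exact h1 _ h
  · exact h2 _ h

lemma genBy_gen {x : Matrix (Fin n) (Fin n) ℂ} (hx : x ∈ G) : x ∈ genBy G :=
  ⟨[x], fun B hB => ⟨x, hx, Or.inl (List.mem_singleton.mp hB)⟩, List.prod_singleton⟩

lemma genBy_pow {A : Matrix (Fin n) (Fin n) ℂ} (h : A ∈ genBy G) :
    ∀ k : ℕ, A ^ k ∈ genBy G
  | 0 => by rw [pow_zero]; exact genBy_one
  | k + 1 => by rw [pow_succ]; exact genBy_mul (genBy_pow h k) h

/-! ### forward direction -/

lemma forward (hζne : ζ ≠ 0) (hζr : ζ ^ r = 1) :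
    ∀ l : List (Matrix (Fin n) (Fin n) ℂ),
      (∀ B ∈ l, ∃ x ∈ {M : Matrix (Fin n) (Fin n) ℂ | ∃ i ∈ S, M = sgen ζ (i : ℕ)},
        B = x ∨ B = x⁻¹) →
      ∃ d π, Pdiag r S d ∧ Pperm S π ∧ l.prod = mat d π := by
  intro l
  induction l with
  | nil =>
    exact fun _ => ⟨_, _, pdiag_one, pperm_refl S, by rw [List.prod_nil, mat_one]⟩
  | cons B t ih =>
    intro h
    obtain ⟨d2, π2, hd2, hπ2, h2⟩ := ih fun x hx => h x (List.mem_cons_of_mem _ hx)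
    obtain ⟨x, hxg, hBx⟩ := h B List.mem_cons_self
    obtain ⟨i, hi, rfl⟩ := hxg
    obtain ⟨d1, π1, hd1, hπ1, h1⟩ := gen_form hζne hζr hi
    rcases hBx with rfl | rfl
    · exact ⟨_, _, pdiag_mul hd1 hd2 hπ1, pperm_trans hπ1 hπ2,
        by rw [List.prod_cons, h2, h1, mat_mul]⟩
    · refine ⟨_, _, pdiag_mul (pdiag_inv hd1 hπ1) hd2 (pperm_symm hπ1),
        pperm_trans (pperm_symm hπ1) hπ2, ?_⟩
      rw [List.prod_cons, h2, h1, inv_mat hd1.1, mat_mul]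

/-! ### inversion counting -/

def invCount (π : Equiv.Perm (Fin n)) : ℕ :=
  (Finset.univ.filter fun p : Fin n × Fin n => p.1 < p.2 ∧ π p.2 < π p.1).card

lemma eq_one_of_invCount_zero {π : Equiv.Perm (Fin n)} (h : invCount π = 0) :
    π = 1 := by
  have hmono : StrictMono π := by
    intro a b hab
    by_contra hc
    have hlt : π b < π a :=
      lt_of_le_of_ne (not_lt.mp hc) fun he => (ne_of_lt hab) (π.injective he).symm
    have hmem : (a, b) ∈ (Finset.univ.filter
        fun p : Fin n × Fin n => p.1 < p.2 ∧ π p.2 < π p.1) :=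
      Finset.mem_filter.mpr ⟨Finset.mem_univ _, hab, hlt⟩
    rw [invCount, Finset.card_eq_zero] at h
    rw [h] at hmem
    exact absurd hmem (Finset.notMem_empty _)
  have hfun : ⇑π = id := by
    have inst : WellFoundedLT (Fin n) := inferInstance
    refine (@StrictMono.range_inj (Fin n) (Fin n) _ _ inst _ _ hmono strictMono_id).mp ?_
    rw [Equiv.range_eq_univ, Set.range_id]
  exact Equiv.ext fun a => congrFun hfun a

lemma exists_descent {π : Equiv.Perm (Fin n)} (h : invCount π ≠ 0) :
    ∃ m, ∃ hm : m < n, ∃ hm1 : m + 1 < n, π ⟨m + 1, hm1⟩ < π ⟨m, hm⟩ := by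
  by_contra hc
  push_neg at hc
  apply h
  have hmono : StrictMono π := by
    cases n with
    | zero => exact fun a => a.elim0
    | succ n' =>
      rw [Fin.strictMono_iff_lt_succ]
      intro i
      have h2 : (i : ℕ) + 1 < n' + 1 := by omega
      have h3 := hc (i : ℕ) (by omega) h2
      have hne : (Fin.castSucc i) ≠ i.succ := by
        intro he
        have := congrArg Fin.val he
        simp at this
      refine lt_of_le_of_ne ?_ fun he => hne (π.injective he)
      have e1 : Fin.castSucc i = (⟨(i : ℕ), by omega⟩ : Fin (n' + 1)) := rfl
      have e2 : i.succ = (⟨(i : ℕ) + 1, h2⟩ : Fin (n' + 1)) := rfl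
      rw [e1, e2]
      exact h3
  rw [invCount, Finset.card_eq_zero, Finset.filter_eq_empty_iff]
  rintro p _
  rintro ⟨h1, h2⟩
  exact absurd (hmono h1) (not_lt.mpr (le_of_lt h2))

lemma swap_lt_of_lt {m : ℕ} (hm : m < n) (hm1 : m + 1 < n) {a b : Fin n}
    (hab : a < b) (hne : ¬(a = ⟨m, hm⟩ ∧ b = ⟨m + 1, hm1⟩)) :
    Equiv.swap (⟨m, hm⟩ : Fin n) ⟨m + 1, hm1⟩ a
      < Equiv.swap (⟨m, hm⟩ : Fin n) ⟨m + 1, hm1⟩ b := by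
  have hne' : ¬((a : ℕ) = m ∧ (b : ℕ) = m + 1) := by
    intro hc
    exact hne ⟨Fin.ext hc.1, Fin.ext hc.2⟩
  have hab' : (a : ℕ) < (b : ℕ) := hab
  rw [Fin.lt_def, swap_val hm hm1 a, swap_val hm hm1 b,
    Equiv.swap_apply_def, Equiv.swap_apply_def]
  split_ifs <;> omega

lemma invCount_swap {π : Equiv.Perm (Fin n)} {m : ℕ} (hm : m < n) (hm1 : m + 1 < n)
    (hdes : π ⟨m + 1, hm1⟩ < π ⟨m, hm⟩) :
    invCount ((Equiv.swap (⟨m, hm⟩ : Fin n) ⟨m + 1, hm1⟩).trans π) < invCount π := by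
  classical
  set σ := Equiv.swap (⟨m, hm⟩ : Fin n) ⟨m + 1, hm1⟩ with hσdef
  set π' := σ.trans π with hπ'def
  set s : Finset (Fin n × Fin n) :=
    Finset.univ.filter fun p : Fin n × Fin n => p.1 < p.2 ∧ π p.2 < π p.1 with hs
  set s' : Finset (Fin n × Fin n) :=
    Finset.univ.filter fun p : Fin n × Fin n => p.1 < p.2 ∧ π' p.2 < π' p.1 with hs'
  have key : s'.image (fun p => (σ p.1, σ p.2)) ⊆ s.erase (⟨m, hm⟩, ⟨m + 1, hm1⟩) := by
    intro q hq
    simp only [Finset.mem_image] at hq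
    obtain ⟨p, hp, rfl⟩ := hq
    rw [hs', Finset.mem_filter] at hp
    obtain ⟨-, hlt, hinv⟩ := hp
    have hpne : ¬(p.1 = ⟨m, hm⟩ ∧ p.2 = ⟨m + 1, hm1⟩) := by
      rintro ⟨h1, h2⟩
      rw [h1, h2] at hinv
      have e1 : π' (⟨m + 1, hm1⟩ : Fin n) = π ⟨m, hm⟩ := by
        show π (σ _) = _
        rw [hσdef, Equiv.swap_apply_right]
      have e2 : π' (⟨m, hm⟩ : Fin n) = π ⟨m + 1, hm1⟩ := by
        show π (σ _) = _
        rw [hσdef, Equiv.swap_apply_left]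
      rw [e1, e2] at hinv
      exact absurd hinv (asymm hdes)
    have hσlt : σ p.1 < σ p.2 := swap_lt_of_lt hm hm1 hlt hpne
    rw [Finset.mem_erase]
    constructor
    · intro he
      have h1 : σ p.1 = ⟨m, hm⟩ := congrArg Prod.fst he
      have h2 : σ p.2 = ⟨m + 1, hm1⟩ := congrArg Prod.snd he
      have hp1 : p.1 = (⟨m + 1, hm1⟩ : Fin n) := by
        apply σ.injective
        rw [h1, hσdef, Equiv.swap_apply_right]
      have hp2 : p.2 = (⟨m, hm⟩ : Fin n) := by
        apply σ.injective
        rw [h2, hσdef, Equiv.swap_apply_left]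
      rw [hp1, hp2] at hlt
      have : (m : ℕ) + 1 < m := hlt
      omega
    · rw [hs, Finset.mem_filter]
      exact ⟨Finset.mem_univ _, hσlt, hinv⟩
  have hmem : ((⟨m, hm⟩ : Fin n), (⟨m + 1, hm1⟩ : Fin n)) ∈ s := by
    rw [hs, Finset.mem_filter]
    refine ⟨Finset.mem_univ _, ?_, hdes⟩
    show (m : ℕ) < m + 1
    omega
  have hinj : Function.Injective (fun p : Fin n × Fin n => (σ p.1, σ p.2)) := by
    intro p q h
    rw [Prod.mk.injEq] at h
    exact Prod.ext (σ.injective h.1) (σ.injective h.2)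
  calc invCount π' = s'.card := rfl
    _ = (s'.image fun p => (σ p.1, σ p.2)).card :=
        (Finset.card_image_of_injective s' hinj).symm
    _ ≤ (s.erase (⟨m, hm⟩, ⟨m + 1, hm1⟩)).card := Finset.card_le_card key
    _ < s.card := Finset.card_erase_lt_of_mem hmem

/-! ### permutation part is generated -/

lemma perm_mem (ζ : ℂ) :
    ∀ N : ℕ, ∀ π : Equiv.Perm (Fin n), invCount π ≤ N → Pperm S π →
      mat (fun _ => (1 : ℂ)) π
        ∈ genBy {M : Matrix (Fin n) (Fin n) ℂ | ∃ i ∈ S, M = sgen ζ (i : ℕ)} := by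
  intro N
  induction N with
  | zero =>
    intro π hπ0 _
    rw [Nat.le_zero] at hπ0
    rw [eq_one_of_invCount_zero hπ0,
      show (1 : Equiv.Perm (Fin n)) = Equiv.refl (Fin n) from rfl, mat_one]
    exact genBy_one
  | succ N ih =>
    intro π hπN hπ
    by_cases h0 : invCount π = 0
    · rw [eq_one_of_invCount_zero h0,
        show (1 : Equiv.Perm (Fin n)) = Equiv.refl (Fin n) from rfl, mat_one]
      exact genBy_one
    · obtain ⟨m, hm, hm1, hdes⟩ := exists_descent h0
      have hS1 : (⟨m + 1, hm1⟩ : Fin n) ∈ S := by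
        by_contra hns
        have h1 : π ⟨m, hm⟩ < (⟨m + 1, hm1⟩ : Fin n) :=
          (hπ _ hns ⟨m, hm⟩).mp (Fin.mk_lt_mk.mpr (by omega))
        have h3 : ¬ π ⟨m + 1, hm1⟩ < (⟨m + 1, hm1⟩ : Fin n) := fun hh =>
          lt_irrefl _ ((hπ _ hns ⟨m + 1, hm1⟩).mpr hh)
        exact h3 (lt_trans hdes h1)
      have hσgen : mat (fun _ => (1 : ℂ)) (Equiv.swap (⟨m, hm⟩ : Fin n) ⟨m + 1, hm1⟩)
          ∈ genBy {M : Matrix (Fin n) (Fin n) ℂ | ∃ i ∈ S, M = sgen ζ (i : ℕ)} :=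
        genBy_gen ⟨⟨m + 1, hm1⟩, hS1, (sgen_succ ζ hm hm1).symm⟩
      have hπ' : Pperm S ((Equiv.swap (⟨m, hm⟩ : Fin n) ⟨m + 1, hm1⟩).trans π) :=
        pperm_trans (pperm_swap hm hm1 hS1) hπ
      have hlt := invCount_swap hm hm1 hdes
      have hmem' := ih _ (by omega) hπ'
      have hkey : mat (fun _ => (1 : ℂ)) π
          = mat (fun _ => (1 : ℂ)) (Equiv.swap (⟨m, hm⟩ : Fin n) ⟨m + 1, hm1⟩)
            * mat (fun _ => (1 : ℂ))
              ((Equiv.swap (⟨m, hm⟩ : Fin n) ⟨m + 1, hm1⟩).trans π) := by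
        rw [mat_mul]
        refine (mat_congr ?_ ?_).symm
        · funext a; rw [one_mul]
        · ext a
          simp [Equiv.trans_apply, Equiv.swap_apply_self]
      rw [hkey]
      exact genBy_mul hσgen hmem'

/-! ### diagonal part is generated -/

lemma diagE (ζ : ℂ) :
    ∀ m : ℕ, ∀ hm : m < n, (∀ j : Fin n, (j : ℕ) ≤ m → j ∈ S) →
      mat (fun x => if x = ⟨m, hm⟩ then ζ else 1) (Equiv.refl (Fin n))
        ∈ genBy {M : Matrix (Fin n) (Fin n) ℂ | ∃ i ∈ S, M = sgen ζ (i : ℕ)} := by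
  intro m
  induction m with
  | zero =>
    intro hm hall
    apply genBy_gen
    refine ⟨⟨0, hm⟩, hall _ (Nat.le_refl 0), ?_⟩
    rw [show (((⟨0, hm⟩ : Fin n) : ℕ)) = 0 from rfl, sgen_zero ζ hm]
    refine mat_congr ?_ rfl
    funext x
    by_cases hx : x = (⟨0, hm⟩ : Fin n)
    · rw [if_pos hx, if_pos (by rw [hx])]
    · rw [if_neg hx, if_neg (fun hc => hx (Fin.ext hc))]
  | succ m ihm =>
    intro hm1 hall
    have hm : m < n := by omega
    have hE := ihm hm fun j hj => hall j (by omega)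
    have hSm1 : (⟨m + 1, hm1⟩ : Fin n) ∈ S := hall _ (Nat.le_refl _)
    have hσ : mat (fun _ => (1 : ℂ)) (Equiv.swap (⟨m, hm⟩ : Fin n) ⟨m + 1, hm1⟩)
        ∈ genBy {M : Matrix (Fin n) (Fin n) ℂ | ∃ i ∈ S, M = sgen ζ (i : ℕ)} :=
      genBy_gen ⟨⟨m + 1, hm1⟩, hSm1, (sgen_succ ζ hm hm1).symm⟩
    have hkey : mat (fun x => if x = (⟨m + 1, hm1⟩ : Fin n) then ζ else 1)
          (Equiv.refl (Fin n))
        = mat (fun _ => (1 : ℂ)) (Equiv.swap (⟨m, hm⟩ : Fin n) ⟨m + 1, hm1⟩)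
          * mat (fun x => if x = (⟨m, hm⟩ : Fin n) then ζ else 1) (Equiv.refl (Fin n))
          * mat (fun _ => (1 : ℂ)) (Equiv.swap (⟨m, hm⟩ : Fin n) ⟨m + 1, hm1⟩) := by
      rw [mat_mul, mat_mul]
      refine (mat_congr ?_ ?_).symm
      · funext a
        rw [one_mul, mul_one]
        by_cases h : a = (⟨m + 1, hm1⟩ : Fin n)
        · rw [if_pos (by rw [h]; exact Equiv.swap_apply_right _ _), if_pos h]
        · rw [if_neg, if_neg h]
          intro hc
          apply h
          have := congrArg (Equiv.swap (⟨m, hm⟩ : Fin n) ⟨m + 1, hm1⟩) hc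
          rwa [Equiv.swap_apply_self, Equiv.swap_apply_left] at this
      · ext a
        simp [Equiv.trans_apply, Equiv.swap_apply_self]
    rw [hkey]
    exact genBy_mul (genBy_mul hσ hE) hσ

lemma diag_pow (c : ℂ) (a : Fin n) (k : ℕ) :
    mat (fun x => if x = a then c else 1) (Equiv.refl (Fin n)) ^ k
      = mat (fun x => if x = a then c ^ k else 1) (Equiv.refl (Fin n)) := by
  induction k with
  | zero =>
    rw [pow_zero,
      show (fun x : Fin n => if x = a then c ^ 0 else 1) = fun _ => (1 : ℂ) from
        funext fun x => by rw [pow_zero, ite_self], mat_one]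
  | succ k ih =>
    rw [pow_succ, ih, mat_mul]
    refine mat_congr ?_ (Equiv.refl_trans _)
    funext x
    simp only [Equiv.refl_apply]
    by_cases hx : x = a
    · simp [hx, pow_succ]
    · simp [hx]

lemma diag_mem (hζ : IsPrimitiveRoot ζ r) (hr : r ≠ 0) :
    ∀ N : ℕ, ∀ d : Fin n → ℂ, (Finset.univ.filter fun a => d a ≠ 1).card ≤ N →
      Pdiag r S d →
      mat d (Equiv.refl (Fin n))
        ∈ genBy {M : Matrix (Fin n) (Fin n) ℂ | ∃ i ∈ S, M = sgen ζ (i : ℕ)} := by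
  haveI : NeZero r := ⟨hr⟩
  intro N
  induction N with
  | zero =>
    intro d hcard hd
    have hall : ∀ a, d a = 1 := by
      intro a
      by_contra hne
      have hmem : a ∈ Finset.univ.filter (fun a => d a ≠ 1) :=
        Finset.mem_filter.mpr ⟨Finset.mem_univ _, hne⟩
      rw [Nat.le_zero, Finset.card_eq_zero] at hcard
      rw [hcard] at hmem
      exact absurd hmem (Finset.notMem_empty _)
    rw [show d = fun _ => (1 : ℂ) from funext hall, mat_one]
    exact genBy_one
  | succ N ih =>
    intro d hcard hd
    by_cases hex : ∃ a, d a ≠ 1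
    · obtain ⟨a, ha⟩ := hex
      obtain ⟨k, -, hk⟩ := hζ.eq_pow_of_pow_eq_one (hd.2.1 a)
      have hallS : ∀ j : Fin n, (j : ℕ) ≤ (a : ℕ) → j ∈ S := by
        intro j hj
        by_contra hjs
        exact ha (hd.2.2 a ⟨j, hjs, Fin.le_def.mpr hj⟩)
      have hEa := genBy_pow (diagE ζ (a : ℕ) a.isLt hallS) k
      rw [diag_pow] at hEa
      simp only [Fin.eta] at hEa
      have hsplit : mat d (Equiv.refl (Fin n))
          = mat (fun x => if x = a then ζ ^ k else 1) (Equiv.refl (Fin n))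
            * mat (Function.update d a 1) (Equiv.refl (Fin n)) := by
        rw [mat_mul]
        refine mat_congr ?_ (Equiv.refl_trans _).symm
        funext x
        simp only [Equiv.refl_apply]
        by_cases hx : x = a
        · subst hx
          rw [if_pos rfl, Function.update_self, mul_one, hk]
        · rw [if_neg hx, Function.update_of_ne hx, one_mul]
      have hd' : Pdiag r S (Function.update d a 1) := by
        refine ⟨fun x => ?_, fun x => ?_, fun x hx => ?_⟩
        · by_cases hxa : x = a
          · subst hxa; rw [Function.update_self]; exact one_ne_zero
          · rw [Function.update_of_ne hxa]; exact hd.1 x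
        · by_cases hxa : x = a
          · subst hxa; rw [Function.update_self]; exact one_pow r
          · rw [Function.update_of_ne hxa]; exact hd.2.1 x
        · by_cases hxa : x = a
          · subst hxa; rw [Function.update_self]
          · rw [Function.update_of_ne hxa]; exact hd.2.2 x hx
      have hcard' : (Finset.univ.filter fun x => Function.update d a 1 x ≠ 1).card ≤ N := by
        have hsub : (Finset.univ.filter fun x => Function.update d a 1 x ≠ 1)
            ⊆ (Finset.univ.filter fun x => d x ≠ 1).erase a := by
          intro x hx
          rw [Finset.mem_filter] at hx
          have hxa : x ≠ a := by
            rintro rfl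
            exact hx.2 (Function.update_self _ _ _)
          rw [Finset.mem_erase, Finset.mem_filter]
          refine ⟨hxa, Finset.mem_univ _, ?_⟩
          have hx2 := hx.2
          rwa [Function.update_of_ne hxa] at hx2
        have h1 := Finset.card_le_card hsub
        have hamem : a ∈ Finset.univ.filter fun x => d x ≠ 1 :=
          Finset.mem_filter.mpr ⟨Finset.mem_univ a, ha⟩
        have h2 := Finset.card_erase_lt_of_mem hamem
        omega
      rw [hsplit]
      exact genBy_mul hEa (ih _ hcard' hd')
    · push_neg at hex
      rw [show d = fun _ => (1 : ℂ) from funext hex, mat_one]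
      exact genBy_one

/-! ### membership in the right-hand side set -/

lemma mat_ne_zero_iff {d : Fin n → ℂ} {π : Equiv.Perm (Fin n)} (hd0 : ∀ a, d a ≠ 0)
    {a b : Fin n} : mat d π a b ≠ 0 ↔ π a = b := by
  constructor
  · intro h
    by_contra hc
    exact h (by simp [mat, hc])
  · intro h
    simpa [mat, h] using hd0 a

lemma mat_mem_rhs (hr : r ≠ 0) {d : Fin n → ℂ} {π : Equiv.Perm (Fin n)}
    (hd : Pdiag r S d) (hπ : Pperm S π) :
    mat d π ∈ Srn r n ∧
      (∀ a b : Fin n,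
        (∃ j : Fin n, j ∉ S ∧
          (((a : ℕ) < (j : ℕ) ∧ (j : ℕ) ≤ (b : ℕ)) ∨
           ((b : ℕ) < (j : ℕ) ∧ (j : ℕ) ≤ (a : ℕ)))) → mat d π a b = 0) ∧
      (∀ a b : Fin n, mat d π a b ≠ 0 →
        (∃ j : Fin n, j ∉ S ∧ (j : ℕ) ≤ (a : ℕ)) → mat d π a b = 1) := by
  have hval : ∀ a, mat d π a (π a) = d a := fun a => by simp [mat]
  refine ⟨⟨?_, ?_, ?_⟩, ?_, ?_⟩
  · intro a
    refine ⟨π a, by show mat d π a (π a) ≠ 0; rw [hval]; exact hd.1 a,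
      fun y hy => ((mat_ne_zero_iff hd.1).mp hy).symm⟩
  · intro b
    refine ⟨π.symm b, ?_, fun y hy => ?_⟩
    · have : mat d π (π.symm b) b ≠ 0 :=
        (mat_ne_zero_iff hd.1).mpr (π.apply_symm_apply b)
      exact this
    · have := (mat_ne_zero_iff hd.1).mp hy
      rw [← this, Equiv.symm_apply_apply]
  · intro a b hne
    have hb := (mat_ne_zero_iff hd.1).mp hne
    rw [← hb, hval]
    exact hd.2.1 a
  · rintro a b ⟨j, hj, hcase⟩
    by_cases hb : π a = b
    · exfalso
      have hiff := hπ j hj a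
      rw [Fin.lt_def, Fin.lt_def] at hiff
      have hval2 : (π a : ℕ) = (b : ℕ) := by rw [hb]
      rcases hcase with ⟨h1, h2⟩ | ⟨h1, h2⟩ <;> omega
    · simp [mat, hb]
  · rintro a b hne ⟨j, hj, hja⟩
    have hb := (mat_ne_zero_iff hd.1).mp hne
    rw [← hb, hval]
    exact hd.2.2 a ⟨j, hj, Fin.le_def.mpr hja⟩

lemma rhs_form {A : Matrix (Fin n) (Fin n) ℂ} (hA1 : A ∈ Srn r n)
    (hA2 : ∀ a b : Fin n,
      (∃ j : Fin n, j ∉ S ∧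
        (((a : ℕ) < (j : ℕ) ∧ (j : ℕ) ≤ (b : ℕ)) ∨
         ((b : ℕ) < (j : ℕ) ∧ (j : ℕ) ≤ (a : ℕ)))) → A a b = 0)
    (hA3 : ∀ a b : Fin n, A a b ≠ 0 →
      (∃ j : Fin n, j ∉ S ∧ (j : ℕ) ≤ (a : ℕ)) → A a b = 1) :
    ∃ d π, Pdiag r S d ∧ Pperm S π ∧ A = mat d π := by
  obtain ⟨h1, h2, h3⟩ := hA1
  choose f hf hfu using h1
  have hinj : Function.Injective f := by
    intro a1 a2 he
    obtain ⟨b0, hb0, hbu⟩ := h2 (f a1)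
    have ha2 : A a2 (f a1) ≠ 0 := by rw [he]; exact hf a2
    rw [hbu a1 (hf a1), hbu a2 ha2]
  have hbij : Function.Bijective f := Finite.injective_iff_bijective.mp hinj
  let π := Equiv.ofBijective f hbij
  have hπa : ∀ a, π a = f a := fun a => rfl
  have hAeq : A = mat (fun a => A a (f a)) π := by
    ext a b
    simp only [mat, Matrix.of_apply, hπa]
    by_cases hb : f a = b
    · rw [if_pos hb, hb]
    · rw [if_neg hb]
      by_contra hc
      exact hb ((hfu a b hc).symm ▸ rfl)
  have hπ : Pperm S π := by
    intro j hj a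
    rw [hπa]
    constructor
    · intro h
      by_contra hc
      refine hf a (hA2 a (f a) ⟨j, hj, Or.inl ⟨h, ?_⟩⟩)
      exact Fin.le_def.mp (not_lt.mp hc)
    · intro h
      by_contra hc
      refine hf a (hA2 a (f a) ⟨j, hj, Or.inr ⟨h, ?_⟩⟩)
      exact Fin.le_def.mp (not_lt.mp hc)
  refine ⟨fun a => A a (f a), π, ⟨fun a => hf a, fun a => h3 a (f a) (hf a), ?_⟩, hπ, hAeq⟩
  rintro a ⟨j, hj, hja⟩
  exact hA3 a (f a) (hf a) ⟨j, hj, Fin.le_def.mp hja⟩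

end Stmt11Aux

/-- Remark 6.3: for `S ⊆ T` (given by its set of indices
`S ⊆ {0,…,n-1}`), the subgroup generated by `S` consists exactly of the matrices
`A ∈ S(r,n)` that are block-diagonal with respect to the cuts at the indices
`j ∈ T ∖ S` (0-based: `A a b = 0` whenever some such `j` satisfies `a < j ≤ b` or
`b < j ≤ a`), and whose nonzero entries in the rows at or below the first cut all
equal `1`. -/
theorem stmt11 (r n : ℕ) (hr : 2 ≤ r) (hn : 1 ≤ n) (ζ : ℂ) (hζ : IsPrimitiveRoot ζ r)
    (S : Set (Fin n)) :
    genBy {M : Matrix (Fin n) (Fin n) ℂ | ∃ i ∈ S, M = sgen ζ (i : ℕ)} =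
      {A | A ∈ Srn r n ∧
        (∀ a b : Fin n,
          (∃ j : Fin n, j ∉ S ∧
            (((a : ℕ) < (j : ℕ) ∧ (j : ℕ) ≤ (b : ℕ)) ∨
             ((b : ℕ) < (j : ℕ) ∧ (j : ℕ) ≤ (a : ℕ)))) → A a b = 0) ∧
        (∀ a b : Fin n, A a b ≠ 0 →
          (∃ j : Fin n, j ∉ S ∧ (j : ℕ) ≤ (a : ℕ)) → A a b = 1)} := by
  open Stmt11Aux in
  have hr0 : r ≠ 0 := by omega
  have hζne : ζ ≠ 0 := hζ.ne_zero hr0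
  have hζr : ζ ^ r = 1 := hζ.pow_eq_one
  ext A
  constructor
  · rintro ⟨l, hl, rfl⟩
    obtain ⟨d, π, hd, hπ, hEq⟩ := Stmt11Aux.forward hζne hζr l hl
    rw [hEq]
    exact Stmt11Aux.mat_mem_rhs hr0 hd hπ
  · rintro ⟨hA1, hA2, hA3⟩
    obtain ⟨d, π, hd, hπ, rfl⟩ := Stmt11Aux.rhs_form hA1 hA2 hA3
    have hsplit : Stmt11Aux.mat d π
        = Stmt11Aux.mat d (Equiv.refl (Fin n)) * Stmt11Aux.mat (fun _ => (1 : ℂ)) π := by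
      rw [Stmt11Aux.mat_mul]
      refine (Stmt11Aux.mat_congr ?_ (Equiv.refl_trans π)).symm
      funext a
      rw [mul_one]
    rw [hsplit]
    exact Stmt11Aux.genBy_mul
      (Stmt11Aux.diag_mem hζ hr0 _ d le_rfl hd)
      (Stmt11Aux.perm_mem ζ (Stmt11Aux.invCount π) π le_rfl hπ)
end
end
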